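/- arXiv:1510.04443 — 14 statements merged into one kernel-verified Lean document; each statement's English description precedes it below -/
import Mathlib

section
/- Let R be a commutative ring, Y a nonempty subset of Spec(R), and U an ultrafilter on Y. Then the set P_U := {f ∈ R : {P ∈ Y : f ∈ P} ∈ U} is a prime ideal of R. -/
/-- Let `R` be a commutative ring, `Y` a nonempty subset of `Spec R`, and `U` an ultrafilter
on `Y`. Then the set `P_U := {f ∈ R : {P ∈ Y : f ∈ P} ∈ U}` is a prime ideal of `R`. -/
theorem ultrafilter_limit_is_prime_ideal (R : Type*) [CommRing R]
    (Y : Set (PrimeSpectrum R)) (hY : Y.Nonempty) (U : Ultrafilter Y) :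
    ∃ I : Ideal R, I.IsPrime ∧
      (I : Set R) = {f : R | {P : Y | f ∈ (P : PrimeSpectrum R).asIdeal} ∈ U} := by
  refine ⟨{ carrier := {f : R | {P : Y | f ∈ (P : PrimeSpectrum R).asIdeal} ∈ U}
            zero_mem' := ?_
            add_mem' := ?_
            smul_mem' := ?_ }, ⟨?_, ?_⟩, rfl⟩
  · intro a b ha hb
    filter_upwards [ha, hb] with P hPa hPb using add_mem hPa hPb
  · exact Filter.mem_of_superset U.univ_mem fun P _ => (zero_mem (P : PrimeSpectrum R).asIdeal : _)
  · intro c f hf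
    filter_upwards [hf] with P hP using Ideal.mul_mem_left _ c hP
  · intro h
    have h1 : {P : Y | (1:R) ∈ (P : PrimeSpectrum R).asIdeal} ∈ U := by
      simpa using Ideal.eq_top_iff_one _ |>.mp h
    have : (∅ : Set Y) ∈ U := by
      convert h1 using 1
      ext P
      simpa using (P : PrimeSpectrum R).isPrime.ne_top ∘ (Ideal.eq_top_iff_one _).mpr
    exact U.empty_notMem this
  · intro a b hab
    have : {P : Y | a ∈ (P : PrimeSpectrum R).asIdeal} ∪
        {P : Y | b ∈ (P : PrimeSpectrum R).asIdeal} ∈ U := by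
      refine U.toFilter.mem_of_superset hab ?_
      intro P hP
      exact ((P : PrimeSpectrum R).isPrime.mem_or_mem hP).imp id id
    exact (Ultrafilter.union_mem_iff).mp this
end

section
/- Let R be a commutative ring and Y ⊆ Spec(R). Then Y is closed in the constructible (patch) topology on Spec(R) if and only if for every ultrafilter U on Y, the ultrafilter limit prime ideal P_U := {f ∈ R : {P ∈ Y : f ∈ P} ∈ U} belongs to Y. -/
/-- The constructible (patch) topology on `Spec R`: the coarsest topology in which all
quasi-compact Zariski-open subsets are clopen. -/
def patchTopology (R : Type*) [CommRing R] : TopologicalSpace (PrimeSpectrum R) :=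
  TopologicalSpace.generateFrom
    {s : Set (PrimeSpectrum R) |
      (IsOpen s ∧ IsCompact s) ∨ ∃ u : Set (PrimeSpectrum R), IsOpen u ∧ IsCompact u ∧ s = uᶜ}

/-- `Y ⊆ Spec R` is closed in the constructible (patch) topology if and only if, for every
ultrafilter `U` on `Y`, the ultrafilter limit prime `P_U = {f : {P ∈ Y : f ∈ P} ∈ U}`
belongs to `Y`. -/
theorem patchClosed_iff_ultrafilter_stable (R : Type*) [CommRing R]
    (Y : Set (PrimeSpectrum R)) :
    @IsClosed _ (patchTopology R) Y ↔
      ∀ (U : Ultrafilter Y) (P : PrimeSpectrum R),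
        (∀ f : R, f ∈ P.asIdeal ↔ {Q : Y | f ∈ (Q : PrimeSpectrum R).asIdeal} ∈ U) →
          P ∈ Y := by
  constructor
  · intro hY U P hP
    -- the pushforward ultrafilter converges to P in the patch topology
    have hconv : (U.map (Subtype.val) : Filter (PrimeSpectrum R)) ≤ @nhds _ (patchTopology R) P := by
      rw [patchTopology, TopologicalSpace.nhds_generateFrom]
      refine le_iInf₂ fun s hs => ?_
      obtain ⟨hPs, hgen⟩ := hs
      rw [Filter.le_principal_iff, Ultrafilter.mem_coe, Ultrafilter.mem_map]
      rcases hgen with ⟨hso, hsc⟩ | ⟨u, huo, huc, rfl⟩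
      · obtain ⟨t, ht⟩ := PrimeSpectrum.isCompact_isOpen_iff.mp ⟨hsc, hso⟩
        subst ht
        simp only [Set.mem_compl_iff, PrimeSpectrum.mem_zeroLocus, Set.subset_def] at hPs
        push_neg at hPs
        obtain ⟨f, hft, hfP⟩ := hPs
        have : {Q : Y | f ∈ (Q : PrimeSpectrum R).asIdeal} ∉ U := fun h => hfP ((hP f).mpr h)
        have h2 : {Q : Y | f ∉ (Q : PrimeSpectrum R).asIdeal} ∈ U :=
          (Ultrafilter.compl_mem_iff_notMem).mpr this
        exact Filter.mem_of_superset h2 (fun Q hQ hQ' => hQ (hQ' hft))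
      · obtain ⟨t, ht⟩ := PrimeSpectrum.isCompact_isOpen_iff.mp ⟨huc, huo⟩
        subst ht
        rw [compl_compl] at hPs ⊢
        rw [PrimeSpectrum.mem_zeroLocus] at hPs
        have : ⋂ f ∈ t, {Q : Y | f ∈ (Q : PrimeSpectrum R).asIdeal} ∈ U := by
          refine (Filter.biInter_mem t.finite_toSet).mpr fun f hf => ?_
          exact (hP f).mp (hPs hf)
        refine Filter.mem_of_superset this fun Q hQ => ?_
        simp only [Set.mem_iInter] at hQ
        intro g hg
        exact hQ g hg
    have hYmem : Y ∈ U.map (Subtype.val) := by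
      rw [Ultrafilter.mem_map]
      exact Filter.univ_mem' fun Q => Q.2
    exact (@isClosed_iff_ultrafilter _ Y (patchTopology R)).mp hY P (U.map Subtype.val) hconv hYmem
  · intro h
    rw [@isClosed_iff_ultrafilter _ Y (patchTopology R)]
    intro P V hVP hYV
    have hrange : Set.range (Subtype.val : Y → PrimeSpectrum R) ∈ V := by
      rwa [Subtype.range_coe]
    set U : Ultrafilter Y := V.comap Subtype.val_injective hrange with hU
    have hmem : ∀ A : Set (PrimeSpectrum R),
        (Subtype.val ⁻¹' A : Set Y) ∈ U ↔ A ∈ V := by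
      intro A
      rw [hU, ← Ultrafilter.mem_coe, Ultrafilter.coe_comap, Filter.mem_comap_iff
        Subtype.val_injective hrange, Subtype.image_preimage_coe]
      exact ⟨fun h' => Filter.mem_of_superset h' Set.inter_subset_right,
        fun h' => Filter.inter_mem hYV h'⟩
    refine h U P fun f => ?_
    have hbo : ∀ g : R, @IsOpen _ (patchTopology R) (PrimeSpectrum.basicOpen g : Set _) :=
      fun g => TopologicalSpace.GenerateOpen.basic _
        (Or.inl ⟨(PrimeSpectrum.basicOpen g).2, PrimeSpectrum.isCompact_basicOpen g⟩)
    have hbc : ∀ g : R, @IsOpen _ (patchTopology R) ((PrimeSpectrum.basicOpen g : Set _)ᶜ) :=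
      fun g => TopologicalSpace.GenerateOpen.basic _
        (Or.inr ⟨_, (PrimeSpectrum.basicOpen g).2, PrimeSpectrum.isCompact_basicOpen g, rfl⟩)
    constructor
    · intro hf
      have hPmem : P ∈ (PrimeSpectrum.basicOpen f : Set (PrimeSpectrum R))ᶜ := by
        simp [PrimeSpectrum.mem_basicOpen, hf]
      have hn : (PrimeSpectrum.basicOpen f : Set (PrimeSpectrum R))ᶜ ∈ @nhds _ (patchTopology R) P :=
        by letI := patchTopology R; exact (hbc f).mem_nhds hPmem
      have : (PrimeSpectrum.basicOpen f : Set (PrimeSpectrum R))ᶜ ∈ V := hVP hn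
      have := (hmem _).mpr this
      refine Filter.mem_of_superset this fun Q hQ => ?_
      simpa [PrimeSpectrum.mem_basicOpen] using hQ
    · intro hf
      by_contra hfP
      have hPmem : P ∈ (PrimeSpectrum.basicOpen f : Set (PrimeSpectrum R)) := by
        simpa [PrimeSpectrum.mem_basicOpen] using hfP
      have hn : (PrimeSpectrum.basicOpen f : Set (PrimeSpectrum R)) ∈ @nhds _ (patchTopology R) P :=
        by letI := patchTopology R; exact (hbo f).mem_nhds hPmem
      have : (PrimeSpectrum.basicOpen f : Set (PrimeSpectrum R)) ∈ V := hVP hn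
      have h1 := (hmem _).mpr this
      have h2 : {Q : Y | f ∉ (Q : PrimeSpectrum R).asIdeal} ∈ U := by
        refine Filter.mem_of_superset h1 fun Q hQ => ?_
        simpa [PrimeSpectrum.mem_basicOpen] using hQ
      exact (Ultrafilter.compl_mem_iff_notMem.mp h2) hf
end

section
/- Let K be a field, A a subring of K, Z the set of valuation subrings of K containing A, and U an ultrafilter on a nonempty subset Y of Z. Then the set Z_U := {x ∈ K : {V ∈ Y : x ∈ V} ∈ U} is a valuation subring of K containing A. -/
/-- Let `K` be a field, `A` a subring of `K`, `Y` a nonempty set of valuation subrings of `K`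
containing `A`, and `U` an ultrafilter on `Y`. Then
`Z_U := {x ∈ K : {V ∈ Y : x ∈ V} ∈ U}` is a valuation subring of `K` containing `A`. -/
theorem ultrafilter_limit_is_valuationSubring (K : Type*) [Field K] (A : Subring K)
    (Y : Set (ValuationSubring K)) (hY : Y.Nonempty)
    (hA : ∀ V ∈ Y, A ≤ V.toSubring) (U : Ultrafilter Y) :
    ∃ W : ValuationSubring K, A ≤ W.toSubring ∧
      (W : Set K) = {x : K | {V : Y | x ∈ (V : ValuationSubring K)} ∈ U} := by
  let S : Subring K :=
    { carrier := {x : K | {V : Y | x ∈ (V : ValuationSubring K)} ∈ U}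
      zero_mem' := by
        simp only [Set.mem_setOf_eq]
        have : {V : Y | (0:K) ∈ (V : ValuationSubring K)} = Set.univ := by
          ext V; simp [zero_mem]
        rw [this]; exact Filter.univ_mem
      one_mem' := by
        simp only [Set.mem_setOf_eq]
        have : {V : Y | (1:K) ∈ (V : ValuationSubring K)} = Set.univ := by
          ext V; simp [one_mem]
        rw [this]; exact Filter.univ_mem
      add_mem' := by
        intro a b ha hb
        exact Filter.mem_of_superset (Filter.inter_mem ha hb)
          fun V hV => by
            simp only [Set.mem_setOf_eq] at *; exact add_mem hV.1 hV.2
      mul_mem' := by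
        intro a b ha hb
        exact Filter.mem_of_superset (Filter.inter_mem ha hb)
          fun V hV => by
            simp only [Set.mem_setOf_eq] at *; exact mul_mem hV.1 hV.2
      neg_mem' := by
        intro a ha
        exact Filter.mem_of_superset ha fun V hV => by
            simp only [Set.mem_setOf_eq] at *; exact neg_mem hV }
  refine ⟨⟨S, ?_⟩, ?_, rfl⟩
  · intro x
    rcases U.mem_or_compl_mem {V : Y | x ∈ (V : ValuationSubring K)} with h | h
    · exact Or.inl h
    · refine Or.inr (Filter.mem_of_superset h ?_)
      intro V hV
      rcases (V : ValuationSubring K).mem_or_inv_mem x with h' | h'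
      · exact absurd h' hV
      · exact h'
  · intro a ha
    have : {V : Y | (a:K) ∈ (V : ValuationSubring K)} = Set.univ := by
      ext V; simp only [Set.mem_setOf_eq, Set.mem_univ, iff_true]
      exact hA V V.2 ha
    show {V : Y | (a:K) ∈ (V : ValuationSubring K)} ∈ U
    rw [this]; exact Filter.univ_mem
end

section
/- Let A ⊆ B be an extension of commutative rings and let X' be the set of intermediate rings C with A ⊆ C ⊆ B that are integrally closed in B. Then for any ultrafilter U on X', the set A'_U := {x ∈ B : {C ∈ X' : x ∈ C} ∈ U} is an intermediate ring that is integrally closed in B. -/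
/-- Let `A ⊆ B` be an extension of commutative rings and let `X'` be the set of intermediate
rings `A ⊆ C ⊆ B` that are integrally closed in `B`. For any ultrafilter `U` on `X'`, the set
`A'_U := {x ∈ B : {C ∈ X' : x ∈ C} ∈ U} ` is an intermediate ring that is integrally closed
in `B`. -/
theorem ultrafilter_limit_is_integrally_closed_intermediate_ring
    (B : Type*) [CommRing B] (A : Subring B)
    (U : Ultrafilter {C : Subring B // A ≤ C ∧ ∀ x : B, IsIntegral C x → x ∈ C}) :
    ∃ D : Subring B, (A ≤ D ∧ ∀ x : B, IsIntegral D x → x ∈ D) ∧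
      (D : Set B) =
        {x : B | {C : {C : Subring B // A ≤ C ∧ ∀ x : B, IsIntegral C x → x ∈ C} |
          x ∈ (C : Subring B)} ∈ U} := by
  classical
  let X := {C : Subring B // A ≤ C ∧ ∀ x : B, IsIntegral C x → x ∈ C}
  let D : Subring B :=
    { carrier := {x : B | {C : X | x ∈ (C : Subring B)} ∈ U}
      one_mem' := Filter.mem_of_superset Filter.univ_mem fun C _ => one_mem (C : Subring B)
      mul_mem' := fun {a b} ha hb => Filter.mem_of_superset (Filter.inter_mem ha hb)
        (fun C hC => Subring.mul_mem (C : Subring B) hC.1 hC.2)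
      zero_mem' := Filter.mem_of_superset Filter.univ_mem fun C _ => zero_mem (C : Subring B)
      add_mem' := fun {a b} ha hb => Filter.mem_of_superset (Filter.inter_mem ha hb)
        (fun C hC => Subring.add_mem (C : Subring B) hC.1 hC.2)
      neg_mem' := fun {a} ha => Filter.mem_of_superset ha
        (fun C hC => Subring.neg_mem (C : Subring B) hC) }
  refine ⟨D, ⟨?_, ?_⟩, rfl⟩
  · intro a ha
    exact Filter.mem_of_superset Filter.univ_mem fun C _ => C.2.1 ha
  · intro x hx
    obtain ⟨p, hmon, hev⟩ := hx
    set q : Polynomial B := p.map (SubringClass.subtype D) with hq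
    have hqmon : q.Monic := hmon.map _
    have hqev : q.eval x = 0 := by
      rw [hq, Polynomial.eval_map]; exact hev
    have hqcoeff : ∀ n, {C : X | q.coeff n ∈ (C : Subring B)} ∈ U := by
      intro n
      have h1 : q.coeff n = ((p.coeff n : D) : B) := by
        simp [hq, Polynomial.coeff_map]
      rw [h1]
      exact (p.coeff n).2
    have hE : {C : X | ∀ n ∈ q.support, q.coeff n ∈ (C : Subring B)} ∈ U := by
      have h2 := (Filter.biInter_mem (q.support.finite_toSet)).2
        (fun n _ => hqcoeff n)
      refine Filter.mem_of_superset h2 ?_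
      intro C hC n hn
      exact Set.mem_iInter₂.1 hC n hn
    refine Filter.mem_of_superset hE ?_
    intro C hC
    have hsub : (↑q.coeffs : Set B) ⊆ (C : Subring B) := by
      intro c hc
      simp only [Polynomial.coeffs, Finset.coe_image, Set.mem_image,
        Finset.mem_coe] at hc
      obtain ⟨n, hn, rfl⟩ := hc
      exact hC n hn
    have hint : IsIntegral (C : Subring B) x := by
      refine ⟨q.toSubring (C : Subring B) hsub, (Polynomial.monic_toSubring _ _ _).2 hqmon, ?_⟩
      rw [Polynomial.eval₂_eq_eval_map]
      have h3 : (q.toSubring (C : Subring B) hsub).map (algebraMap (C : Subring B) B) = q :=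
        Polynomial.map_toSubring q _ hsub
      rw [h3, hqev]
    exact C.2.2 x hint
end

section
/- Let A ⊆ B be an extension of commutative rings and let X'' be the set of intermediate local rings between A and B. For any ultrafilter U on a nonempty X'', the ring A''_U := {x ∈ B : {T ∈ X'' : x ∈ T} ∈ U} is a local ring, whose maximal ideal is M := {x ∈ B : {T ∈ X'' : x ∈ T and x is not a unit of T} ∈ U}. -/
private lemma inv_unique'' {B : Type*} [CommRing B] {x y z : B}
    (h1 : x * y = 1) (h2 : x * z = 1) : y = z := by
  linear_combination z * h1 - y * h2

private lemma aux_unit {B : Type*} [CommRing B] {A : Subring B}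
    {U : Ultrafilter {T : Subring B // A ≤ T ∧ IsLocalRing T}}
    {D : Subring B}
    (hD : ∀ z : B, z ∈ D ↔
      {T : {T : Subring B // A ≤ T ∧ IsLocalRing T} | z ∈ (T : Subring B)} ∈ U)
    {x : B}
    (h : {T : {T : Subring B // A ≤ T ∧ IsLocalRing T} |
        ∃ hx : x ∈ (T : Subring B), IsUnit (⟨x, hx⟩ : (T : Subring B))} ∈ U) :
    ∃ hx : x ∈ D, IsUnit (⟨x, hx⟩ : D) := by
  obtain ⟨T₀, hx₀, hu₀⟩ := Ultrafilter.nonempty_of_mem h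
  rw [isUnit_iff_exists_inv] at hu₀
  obtain ⟨b, hb⟩ := hu₀
  have hxy : x * (b : B) = 1 := by
    have := congrArg Subtype.val hb
    simpa using this
  have hxD : x ∈ D := by
    rw [hD]
    exact Filter.mem_of_superset h (fun T hT => hT.1)
  have hyD : (b : B) ∈ D := by
    rw [hD]
    refine Filter.mem_of_superset h (fun T hT => ?_)
    obtain ⟨hxT, huT⟩ := hT
    rw [isUnit_iff_exists_inv] at huT
    obtain ⟨c, hc⟩ := huT
    have hxc : x * (c : B) = 1 := by
      have := congrArg Subtype.val hc
      simpa using this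
    have : (b : B) = (c : B) := inv_unique'' hxy hxc
    rw [this]
    exact c.2
  exact ⟨hxD, isUnit_iff_exists_inv.mpr ⟨⟨(b : B), hyD⟩, Subtype.ext (by simpa using hxy)⟩⟩

/-- Let `A ⊆ B` be an extension of commutative rings and `X''` the set of intermediate local
rings between `A` and `B`. For any ultrafilter `U` on a nonempty `X''`, the ring
`A''_U := {x ∈ B : {T ∈ X'' : x ∈ T} ∈ U}` is a local ring, whose maximal ideal is
`M := {x ∈ B : {T ∈ X'' : x ∈ T and x is not a unit of T} ∈ U}`. -/
theorem ultrafilter_limit_is_local_intermediate_ring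
    (B : Type*) [CommRing B] (A : Subring B)
    (hne : Nonempty {T : Subring B // A ≤ T ∧ IsLocalRing T})
    (U : Ultrafilter {T : Subring B // A ≤ T ∧ IsLocalRing T}) :
    ∃ D : Subring B, A ≤ D ∧
      (D : Set B) =
        {x : B | {T : {T : Subring B // A ≤ T ∧ IsLocalRing T} | x ∈ (T : Subring B)} ∈ U} ∧
      ∃ hloc : IsLocalRing D,
        ∀ (x : B) (hx : x ∈ D),
          ((⟨x, hx⟩ : D) ∈ IsLocalRing.maximalIdeal D ↔
            {T : {T : Subring B // A ≤ T ∧ IsLocalRing T} |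
              ∃ h : x ∈ (T : Subring B), ¬ IsUnit (⟨x, h⟩ : (T : Subring B))} ∈ U) := by
  classical
  set D : Subring B :=
    { carrier := {x : B |
        {T : {T : Subring B // A ≤ T ∧ IsLocalRing T} | x ∈ (T : Subring B)} ∈ U},
      one_mem' := Filter.mem_of_superset Filter.univ_mem (fun T _ => T.1.one_mem),
      mul_mem' := fun hx hy => Filter.mem_of_superset (Filter.inter_mem hx hy)
        (fun T hT => T.1.mul_mem hT.1 hT.2),
      add_mem' := fun hx hy => Filter.mem_of_superset (Filter.inter_mem hx hy)
        (fun T hT => T.1.add_mem hT.1 hT.2),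
      zero_mem' := Filter.mem_of_superset Filter.univ_mem (fun T _ => T.1.zero_mem),
      neg_mem' := fun hx => Filter.mem_of_superset hx (fun T hT => T.1.neg_mem hT) } with hDdef
  have hD : ∀ z : B, z ∈ D ↔
      {T : {T : Subring B // A ≤ T ∧ IsLocalRing T} | z ∈ (T : Subring B)} ∈ U :=
    fun _ => Iff.rfl
  have key : ∀ (x : B) (hx : x ∈ D),
      (¬ IsUnit (⟨x, hx⟩ : D)) ↔
        {T : {T : Subring B // A ≤ T ∧ IsLocalRing T} |
          ∃ h : x ∈ (T : Subring B), ¬ IsUnit (⟨x, h⟩ : (T : Subring B))} ∈ U := by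
    intro x hx
    constructor
    · intro hnu
      by_contra hM
      apply hnu
      have hcompl :
          {T : {T : Subring B // A ≤ T ∧ IsLocalRing T} |
            ∃ h : x ∈ (T : Subring B), ¬ IsUnit (⟨x, h⟩ : (T : Subring B))}ᶜ ∈ U :=
        Ultrafilter.compl_mem_iff_notMem.mpr hM
      have hS : {T : {T : Subring B // A ≤ T ∧ IsLocalRing T} |
          ∃ h : x ∈ (T : Subring B), IsUnit (⟨x, h⟩ : (T : Subring B))} ∈ U := by
        refine Filter.mem_of_superset (Filter.inter_mem hcompl ((hD x).mp hx))
          (fun T hT => ?_)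
        obtain ⟨hc, hxT⟩ := hT
        refine ⟨hxT, ?_⟩
        by_contra h'
        exact hc ⟨hxT, h'⟩
      obtain ⟨hx', hu⟩ := aux_unit hD hS
      exact hu
    · intro hM hu
      rw [isUnit_iff_exists_inv] at hu
      obtain ⟨b, hb⟩ := hu
      have hxy : x * (b : B) = 1 := by
        have := congrArg Subtype.val hb
        simpa using this
      have hbU := (hD (b : B)).mp b.2
      obtain ⟨T, hbT, hxT, hnuT⟩ := Ultrafilter.nonempty_of_mem (Filter.inter_mem hbU hM)
      exact hnuT (isUnit_iff_exists_inv.mpr ⟨⟨(b : B), hbT⟩, Subtype.ext (by simpa using hxy)⟩)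
  have hnt : Nontrivial D := by
    obtain ⟨T₀⟩ := hne
    haveI := T₀.2.2
    refine ⟨⟨0, 1, fun h => ?_⟩⟩
    have : (0 : B) = 1 := congrArg Subtype.val h
    exact zero_ne_one (α := (T₀ : Subring B)) (Subtype.ext this)
  have hloc : IsLocalRing D := by
    refine IsLocalRing.of_isUnit_or_isUnit_one_sub_self ?_
    rintro ⟨x, hx⟩
    by_cases h : {T : {T : Subring B // A ≤ T ∧ IsLocalRing T} |
        ∃ h : x ∈ (T : Subring B), ¬ IsUnit (⟨x, h⟩ : (T : Subring B))} ∈ U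
    · right
      have hS : {T : {T : Subring B // A ≤ T ∧ IsLocalRing T} |
          ∃ hm : (1 - x) ∈ (T : Subring B), IsUnit (⟨1 - x, hm⟩ : (T : Subring B))} ∈ U := by
        refine Filter.mem_of_superset h (fun T hT => ?_)
        obtain ⟨hxT, hnu⟩ := hT
        haveI := T.2.2
        rcases IsLocalRing.isUnit_or_isUnit_one_sub_self (⟨x, hxT⟩ : (T : Subring B)) with h' | h'
        · exact absurd h' hnu
        · refine ⟨sub_mem (T : Subring B).one_mem hxT, ?_⟩
          have heq : (⟨1 - x, sub_mem (T : Subring B).one_mem hxT⟩ : (T : Subring B)) =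
              1 - ⟨x, hxT⟩ := Subtype.ext (by push_cast; ring)
          rw [heq]
          exact h'
      obtain ⟨hm, hu⟩ := aux_unit hD hS
      have heq : (1 - ⟨x, hx⟩ : D) = ⟨1 - x, hm⟩ := Subtype.ext (by push_cast; ring)
      rw [heq]
      exact hu
    · left
      by_contra hnu
      exact h ((key x hx).mp hnu)
  refine ⟨D, fun a ha => Filter.mem_of_superset Filter.univ_mem (fun T _ => T.2.1 ha),
    rfl, hloc, ?_⟩
  intro x hx
  rw [IsLocalRing.mem_maximalIdeal, mem_nonunits_iff]
  exact key x hx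
end

section
/- Let X be a spectral space and Y ⊆ X. Then the closure of Y in the inverse topology equals the closure under generization of the closure of Y in the constructible topology, i.e., Cl^inv(Y) = (Cl^cons(Y))^gen; and the closure of Y in the given topology equals the closure under specialization of its constructible closure, Cl(Y) = (Cl^cons(Y))^sp. -/
universe u

/-- A topological space is *spectral* if it is homeomorphic to the prime spectrum of some
commutative ring, endowed with the Zariski topology. -/
def IsSpectralSpace (X : Type u) [TopologicalSpace X] : Prop :=
  ∃ (R : Type u) (_ : CommRing R), Nonempty (X ≃ₜ PrimeSpectrum R)

/-- The inverse topology: the quasi-compact open subsets form a basis of closed sets. -/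
def invTopology (X : Type u) [TopologicalSpace X] : TopologicalSpace X :=
  TopologicalSpace.generateFrom {s : Set X | IsOpen sᶜ ∧ IsCompact sᶜ}

/-- The constructible topology: the coarsest topology in which all quasi-compact open subsets
are clopen. -/
def consTopology (X : Type u) [TopologicalSpace X] : TopologicalSpace X :=
  TopologicalSpace.generateFrom
    {s : Set X | (IsOpen s ∧ IsCompact s) ∨ ∃ u : Set X, IsOpen u ∧ IsCompact u ∧ s = uᶜ}

open Set Topology TopologicalSpace Filter PrimeSpectrum

section AuxLemmas


section Wrappers
variable {A : Type u}

lemma mem_closure_iff' (t : TopologicalSpace A) {s : Set A} {a : A} :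
    a ∈ @closure A t s ↔ ∀ o : Set A, IsOpen[t] o → a ∈ o → (o ∩ s).Nonempty := by
  letI := t; exact mem_closure_iff

lemma subset_closure' (t : TopologicalSpace A) (s : Set A) : s ⊆ @closure A t s := by
  letI := t; exact subset_closure

lemma isClosed_closure' (t : TopologicalSpace A) (s : Set A) :
    IsClosed[t] (@closure A t s) := by
  letI := t; exact isClosed_closure

lemma isClosed_isCompact' (t : TopologicalSpace A) {s : Set A}
    (hc : @CompactSpace A t) (h : IsClosed[t] s) : @IsCompact A t s := by
  letI := t; exact h.isCompact

lemma isClosed_compl_iff' (t : TopologicalSpace A) {s : Set A} :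
    IsClosed[t] sᶜ ↔ IsOpen[t] s := by
  letI := t; exact isClosed_compl_iff

lemma inter_iInter_nonempty' (t : TopologicalSpace A) {ι : Type u} {s : Set A}
    (hs : @IsCompact A t s) (Z : ι → Set A) (hZ : ∀ i, IsClosed[t] (Z i))
    (hfip : ∀ u : Finset ι, (s ∩ ⋂ i ∈ u, Z i).Nonempty) :
    (s ∩ ⋂ i, Z i).Nonempty := by
  letI := t; exact hs.inter_iInter_nonempty Z hZ hfip

end Wrappers

variable {X : Type u} [TopologicalSpace X]


lemma cons_open_of_qc {W : Set X} (h1 : IsOpen W) (h2 : IsCompact W) :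
    IsOpen[consTopology X] W :=
  TopologicalSpace.GenerateOpen.basic _ (Or.inl ⟨h1, h2⟩)

lemma cons_open_compl_of_qc {W : Set X} (h1 : IsOpen W) (h2 : IsCompact W) :
    IsOpen[consTopology X] Wᶜ :=
  TopologicalSpace.GenerateOpen.basic _ (Or.inr ⟨W, h1, h2, rfl⟩)

lemma inv_open_compl_of_qc {W : Set X} (h1 : IsOpen W) (h2 : IsCompact W) :
    IsOpen[invTopology X] Wᶜ :=
  TopologicalSpace.GenerateOpen.basic _ ⟨by rwa [compl_compl], by rwa [compl_compl]⟩

lemma inv_open_basis {O : Set X} (hO : IsOpen[invTopology X] O) :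
    ∀ x ∈ O, ∃ W : Set X, IsOpen W ∧ IsCompact W ∧ x ∉ W ∧ Wᶜ ⊆ O := by
  induction hO with
  | basic s hs =>
      intro x hx
      exact ⟨sᶜ, hs.1, hs.2, fun h => h hx, by rw [compl_compl]⟩
  | univ =>
      intro x _
      exact ⟨∅, isOpen_empty, isCompact_empty, fun h => h, by simp⟩
  | inter s t _ _ ihs iht =>
      intro x hx
      obtain ⟨W1, hW1o, hW1c, hxW1, hW1s⟩ := ihs x hx.1
      obtain ⟨W2, hW2o, hW2c, hxW2, hW2s⟩ := iht x hx.2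
      refine ⟨W1 ∪ W2, hW1o.union hW2o, hW1c.union hW2c, ?_, ?_⟩
      · rintro (h | h); exacts [hxW1 h, hxW2 h]
      · rw [compl_union]
        exact fun z hz => ⟨hW1s hz.1, hW2s hz.2⟩
  | sUnion S _ ih =>
      intro x hx
      obtain ⟨s, hsS, hxs⟩ := hx
      obtain ⟨W, h1, h2, h3, h4⟩ := ih s hsS x hxs
      exact ⟨W, h1, h2, h3, fun z hz => ⟨s, hsS, h4 hz⟩⟩

/-- opens are cons-open, given a basis of quasi-compact opens -/
lemma cons_open_of_open
    (hbasis : ∀ (x : X) (O : Set X), IsOpen O → x ∈ O →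
      ∃ W : Set X, IsOpen W ∧ IsCompact W ∧ x ∈ W ∧ W ⊆ O)
    {O : Set X} (hO : IsOpen O) : IsOpen[consTopology X] O := by
  have : O = ⋃₀ {W : Set X | (IsOpen W ∧ IsCompact W) ∧ W ⊆ O} := by
    apply Set.Subset.antisymm
    · intro x hx
      obtain ⟨W, h1, h2, h3, h4⟩ := hbasis x O hO hx
      exact ⟨W, ⟨⟨h1, h2⟩, h4⟩, h3⟩
    · rintro x ⟨W, ⟨_, hWO⟩, hxW⟩
      exact hWO hxW
  rw [this]
  exact TopologicalSpace.GenerateOpen.sUnion _ fun W hW => cons_open_of_qc hW.1.1 hW.1.2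

theorem key_lemma
    (hbasis : ∀ (x : X) (O : Set X), IsOpen O → x ∈ O →
      ∃ W : Set X, IsOpen W ∧ IsCompact W ∧ x ∈ W ∧ W ⊆ O)
    (hinter : ∀ W1 W2 : Set X, IsOpen W1 → IsCompact W1 → IsOpen W2 → IsCompact W2 →
      IsCompact (W1 ∩ W2))
    (hcons : @CompactSpace X (consTopology X))
    (hcompact : IsCompact (Set.univ : Set X))
    (Y : Set X) :
    @closure X (invTopology X) Y
        = {x : X | ∃ y ∈ @closure X (consTopology X) Y, y ∈ closure {x}} ∧
      closure Y = {x : X | ∃ y ∈ @closure X (consTopology X) Y, x ∈ closure {y}} := by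
  classical
  have hconsCl_closed : IsClosed[consTopology X] (@closure X (consTopology X) Y) :=
    isClosed_closure' (consTopology X) Y
  have hconsCl_cpt : @IsCompact X (consTopology X) (@closure X (consTopology X) Y) :=
    isClosed_isCompact' (consTopology X) hcons hconsCl_closed
  have hYsub : Y ⊆ @closure X (consTopology X) Y := subset_closure' (consTopology X) Y
  constructor
  · apply Set.Subset.antisymm
    · -- invCl Y ⊆ gen of consCl Y
      intro x hx
      -- index : qc opens not containing x
      have hfip : ∀ u : Finset {W : Set X // IsOpen W ∧ IsCompact W ∧ x ∉ W},
          ((@closure X (consTopology X) Y) ∩ ⋂ i ∈ u, (i.1)ᶜ).Nonempty := by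
        intro u
        set W : Set X := ⋃ i ∈ u, i.1 with hW
        have hWo : IsOpen W := isOpen_biUnion fun i _ => i.2.1
        have hWc : IsCompact W := u.finite_toSet.isCompact_biUnion fun i _ => i.2.2.1
        have hxW : x ∉ W := by
          simp only [hW, Set.mem_iUnion]
          rintro ⟨i, _, hxi⟩
          exact i.2.2.2 hxi
        have hmeet : (Wᶜ ∩ Y).Nonempty := by
          have := (mem_closure_iff' (invTopology X) (s := Y) (a := x)).mp hx
          exact this Wᶜ (inv_open_compl_of_qc hWo hWc) hxW
        obtain ⟨y0, hy0W, hy0Y⟩ := hmeet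
        refine ⟨y0, hYsub hy0Y, ?_⟩
        simp only [Set.mem_iInter, Set.mem_compl_iff]
        intro i hi hyi
        exact hy0W (Set.mem_biUnion hi hyi)
      obtain ⟨y, hyCl, hyInt⟩ :=
        inter_iInter_nonempty' (consTopology X) hconsCl_cpt
          (fun i : {W : Set X // IsOpen W ∧ IsCompact W ∧ x ∉ W} => (i.1)ᶜ)
          (fun i => (isClosed_compl_iff' (consTopology X)).mpr
            (cons_open_of_qc i.2.1 i.2.2.1))
          hfip
      refine ⟨y, hyCl, ?_⟩
      rw [mem_closure_iff]
      intro O hO hyO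
      obtain ⟨W, hWo, hWc, hyW, hWO⟩ := hbasis y O hO hyO
      by_cases hxW : x ∈ W
      · exact ⟨x, hWO hxW, rfl⟩
      · exfalso
        have : y ∈ Wᶜ := by
          have := Set.mem_iInter.mp hyInt ⟨W, hWo, hWc, hxW⟩
          exact this
        exact this hyW
    · -- gen of consCl Y ⊆ invCl Y
      rintro x ⟨y, hyCl, hyx⟩
      rw [mem_closure_iff' (invTopology X) (s := Y) (a := x)]
      intro O hO hxO
      obtain ⟨W, hWo, hWc, hxW, hWO⟩ := inv_open_basis hO x hxO
      have hyW : y ∈ Wᶜ := by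
        intro hyW
        have := mem_closure_iff.mp hyx W hWo hyW
        obtain ⟨z, hz, rfl⟩ := this
        exact hxW hz
      have := (mem_closure_iff' (consTopology X) (s := Y) (a := y)).mp hyCl Wᶜ
        (cons_open_compl_of_qc hWo hWc) hyW
      obtain ⟨z, hz1, hz2⟩ := this
      exact ⟨z, hWO hz1, hz2⟩
  · apply Set.Subset.antisymm
    · -- Cl Y ⊆ sp of consCl Y
      intro x hx
      have hfip : ∀ u : Finset {W : Set X // IsOpen W ∧ IsCompact W ∧ x ∈ W},
          ((@closure X (consTopology X) Y) ∩ ⋂ i ∈ u, (i.1 : Set X)).Nonempty := by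
        intro u
        have hqc : IsOpen (⋂ i ∈ u, (i.1 : Set X)) ∧ IsCompact (⋂ i ∈ u, (i.1 : Set X)) := by
          induction u using Finset.induction_on with
          | empty =>
              simp only [Finset.notMem_empty, Set.iInter_of_empty, Set.iInter_univ]
              exact ⟨_root_.isOpen_univ, hcompact⟩
          | @insert j s hni ih =>
              rw [Finset.set_biInter_insert]
              exact ⟨j.2.1.inter ih.1, hinter _ _ j.2.1 j.2.2.1 ih.1 ih.2⟩
        have hxW : x ∈ ⋂ i ∈ u, (i.1 : Set X) := by
          simp only [Set.mem_iInter]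
          exact fun i _ => i.2.2.2
        obtain ⟨y0, hy01, hy02⟩ := mem_closure_iff.mp hx _ hqc.1 hxW
        exact ⟨y0, hYsub hy02, hy01⟩
      obtain ⟨y, hyCl, hyInt⟩ :=
        inter_iInter_nonempty' (consTopology X) hconsCl_cpt
          (fun i : {W : Set X // IsOpen W ∧ IsCompact W ∧ x ∈ W} => (i.1 : Set X))
          (fun i => by
            have := cons_open_compl_of_qc (X := X) i.2.1 i.2.2.1
            have h2 := (isClosed_compl_iff' (consTopology X) (s := (i.1 : Set X)ᶜ)).mpr this
            rwa [compl_compl] at h2)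
          hfip
      refine ⟨y, hyCl, ?_⟩
      rw [mem_closure_iff]
      intro O hO hxO
      obtain ⟨W, hWo, hWc, hxW, hWO⟩ := hbasis x O hO hxO
      have : y ∈ W := Set.mem_iInter.mp hyInt ⟨W, hWo, hWc, hxW⟩
      exact ⟨y, hWO this, rfl⟩
    · -- sp of consCl Y ⊆ Cl Y
      rintro x ⟨y, hyCl, hxy⟩
      rw [mem_closure_iff]
      intro O hO hxO
      have hyO : y ∈ O := by
        obtain ⟨z, hz, rfl⟩ := mem_closure_iff.mp hxy O hO hxO
        exact hz
      have := (mem_closure_iff' (consTopology X) (s := Y) (a := y)).mp hyCl O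
        (cons_open_of_open hbasis hO) hyO
      obtain ⟨z, hz1, hz2⟩ := this
      exact ⟨z, hz1, hz2⟩



lemma cons_compact_spec (R : Type u) [CommRing R] :
    @CompactSpace (PrimeSpectrum R) (consTopology (PrimeSpectrum R)) := by
  refine @CompactSpace.mk _ (consTopology _) ?_
  rw [@isCompact_iff_ultrafilter_le_nhds (PrimeSpectrum R) (consTopology _)]
  intro F _
  classical
  let I : Ideal R :=
    { carrier := {r : R | (basicOpen r : Set (PrimeSpectrum R)) ∉ F}
      zero_mem' := by
        simp only [Set.mem_setOf_eq, basicOpen_zero]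
        simpa using Filter.empty_notMem (F : Filter (PrimeSpectrum R))
      add_mem' := by
        intro a b ha hb
        simp only [Set.mem_setOf_eq] at *
        intro h
        have hsub : (basicOpen (a + b) : Set (PrimeSpectrum R)) ⊆
            (basicOpen a : Set (PrimeSpectrum R)) ∪ (basicOpen b : Set (PrimeSpectrum R)) := by
          intro x hx
          simp only [SetLike.mem_coe, mem_basicOpen, Set.mem_union] at *
          by_contra hc
          push_neg at hc
          exact hx (Ideal.add_mem _ hc.1 hc.2)
        have := Filter.mem_of_superset h hsub
        rcases Ultrafilter.union_mem_iff.mp this with h' | h'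
        exacts [ha h', hb h']
      smul_mem' := by
        intro c x hx
        simp only [Set.mem_setOf_eq, smul_eq_mul] at *
        intro h
        have hsub : (basicOpen (c * x) : Set (PrimeSpectrum R)) ⊆
            (basicOpen x : Set (PrimeSpectrum R)) := by
          have := basicOpen_mul_le_right c x
          exact this
        exact hx (Filter.mem_of_superset h hsub) }
  have hIp : I.IsPrime := by
    constructor
    · rw [Ideal.ne_top_iff_one]
      show ¬ (basicOpen (1 : R) : Set (PrimeSpectrum R)) ∉ F
      rw [not_not, basicOpen_one]
      exact Filter.univ_mem
    · intro a b hab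
      by_contra hc
      push_neg at hc
      have ha : (basicOpen a : Set (PrimeSpectrum R)) ∈ F := not_not.mp hc.1
      have hb : (basicOpen b : Set (PrimeSpectrum R)) ∈ F := not_not.mp hc.2
      have : (basicOpen (a * b) : Set (PrimeSpectrum R)) ∈ F := by
        rw [basicOpen_mul]
        exact Filter.inter_mem ha hb
      exact hab this
  refine ⟨⟨I, hIp⟩, trivial, ?_⟩
  show (F : Filter (PrimeSpectrum R)) ≤ @nhds _ (consTopology _) ⟨I, hIp⟩
  rw [show consTopology (PrimeSpectrum R) = TopologicalSpace.generateFrom _ from rfl,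
    nhds_generateFrom]
  refine le_iInf fun s => le_iInf fun hs => ?_
  rw [le_principal_iff]
  obtain ⟨hps, hsg⟩ := hs
  rcases hsg with ⟨hso, hsc⟩ | ⟨U, hUo, hUc, rfl⟩
  · -- s is a quasi-compact open containing p
    obtain ⟨t, ht⟩ := isCompact_isOpen_iff.mp ⟨hsc, hso⟩
    rw [← ht] at hps ⊢
    rw [Set.mem_compl_iff, mem_zeroLocus, Set.not_subset] at hps
    obtain ⟨f, hft, hfI⟩ := hps
    have hfF : (basicOpen f : Set (PrimeSpectrum R)) ∈ F := not_not.mp hfI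
    refine Filter.mem_of_superset hfF ?_
    rw [basicOpen_eq_zeroLocus_compl]
    exact Set.compl_subset_compl.mpr (zeroLocus_anti_mono (Set.singleton_subset_iff.mpr hft))
  · -- s = Uᶜ with U quasi-compact open, p ∈ Uᶜ
    obtain ⟨t, ht⟩ := isCompact_isOpen_iff.mp ⟨hUc, hUo⟩
    rw [← ht] at hps ⊢
    rw [Set.mem_compl_iff, Set.mem_compl_iff, not_not] at hps
    rw [mem_zeroLocus] at hps
    have : ∀ f ∈ t, ((basicOpen f : Set (PrimeSpectrum R))ᶜ : Set _) ∈ F := by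
      intro f hft
      have hfI : f ∈ I := hps hft
      exact Ultrafilter.compl_mem_iff_notMem.mpr hfI
    have heq : ((zeroLocus (t : Set R))ᶜ)ᶜ = ⋂ f ∈ t, ((basicOpen f : Set (PrimeSpectrum R))ᶜ) := by
      rw [compl_compl]
      have : zeroLocus (t : Set R) = ⋂ f ∈ t, zeroLocus {f} := by
        rw [← zeroLocus_iUnion₂]
        congr 1
        ext x
        simp [Set.subset_def, SetLike.mem_coe]
      rw [this]
      refine Set.iInter₂_congr fun f hf => ?_
      rw [basicOpen_eq_zeroLocus_compl, compl_compl]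
    rw [heq]
    exact (Filter.biInter_mem t.finite_toSet).mpr this


section MoreWrappers
variable {A B : Type u}

lemma continuous_generateFrom' {tA : TopologicalSpace A} {g : Set (Set B)} {f : A → B}
    (h : ∀ s ∈ g, IsOpen[tA] (f ⁻¹' s)) :
    @Continuous A B tA (TopologicalSpace.generateFrom g) f := by
  letI := tA
  letI := TopologicalSpace.generateFrom g
  exact continuous_generateFrom_iff.mpr h

lemma isCompact_univ' (t : TopologicalSpace A) (h : @CompactSpace A t) :
    @IsCompact A t Set.univ := by
  letI := t; exact isCompact_univ

lemma isCompact_image' (tA : TopologicalSpace A) (tB : TopologicalSpace B) (f : A → B)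
    (hf : @Continuous A B tA tB f) {s : Set A} (hs : @IsCompact A tA s) :
    @IsCompact B tB (f '' s) := by
  letI := tA; letI := tB; exact hs.image hf

lemma compactSpace_of' (t : TopologicalSpace A) (h : @IsCompact A t Set.univ) :
    @CompactSpace A t := by
  letI := t; exact ⟨h⟩

end MoreWrappers

end AuxLemmas

/-- For `Y` a subset of a spectral space `X`: the inverse closure of `Y` is the closure under
generization of its constructible closure, `Cl^inv(Y) = (Cl^cons(Y))^gen`, and the closure of
`Y` in the given topology is the closure under specialization of its constructible closure,
`Cl(Y) = (Cl^cons(Y))^sp`. -/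
theorem invClosure_eq_gen_of_consClosure_and_closure_eq_sp_of_consClosure
    (X : Type u) [TopologicalSpace X] (hX : IsSpectralSpace X) (Y : Set X) :
    @closure X (invTopology X) Y
        = {x : X | ∃ y ∈ @closure X (consTopology X) Y, y ∈ closure {x}} ∧
      closure Y = {x : X | ∃ y ∈ @closure X (consTopology X) Y, x ∈ closure {y}} := by
  classical
  obtain ⟨R, hR, ⟨e⟩⟩ := hX
  letI : CommRing R := hR
  -- basis of quasi-compact opens
  have hbasis : ∀ (x : X) (O : Set X), IsOpen O → x ∈ O →
      ∃ W : Set X, IsOpen W ∧ IsCompact W ∧ x ∈ W ∧ W ⊆ O := by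
    intro x O hO hx
    have hO' : IsOpen (e '' O) := e.isOpen_image.mpr hO
    obtain ⟨V, ⟨f, rfl⟩, hxV, hVO⟩ :=
      isTopologicalBasis_basic_opens.exists_subset_of_mem_open
        (⟨x, hx, rfl⟩ : e x ∈ e '' O) hO'
    refine ⟨e ⁻¹' (basicOpen f : Set (PrimeSpectrum R)),
      (isOpen_basicOpen).preimage e.continuous,
      e.isCompact_preimage.mpr (isCompact_basicOpen f), hxV, ?_⟩
    intro z hz
    obtain ⟨w, hwO, hwz⟩ := hVO hz
    rwa [← e.injective hwz]
  -- intersections of quasi-compact opens are quasi-compact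
  have hinter : ∀ W1 W2 : Set X, IsOpen W1 → IsCompact W1 → IsOpen W2 → IsCompact W2 →
      IsCompact (W1 ∩ W2) := by
    intro W1 W2 h1o h1c h2o h2c
    obtain ⟨I, hIfg, hI⟩ := isCompact_isOpen_iff_ideal.mp
      ⟨e.isCompact_image.mpr h1c, e.isOpen_image.mpr h1o⟩
    obtain ⟨J, hJfg, hJ⟩ := isCompact_isOpen_iff_ideal.mp
      ⟨e.isCompact_image.mpr h2c, e.isOpen_image.mpr h2o⟩
    have himg : e '' (W1 ∩ W2) = (zeroLocus ((I * J : Ideal R) : Set R))ᶜ := by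
      rw [Set.image_inter e.injective, ← hI, ← hJ, ← compl_union, ← zeroLocus_mul]
    have hcpt : IsCompact (e '' (W1 ∩ W2)) := by
      rw [himg]
      exact (isCompact_isOpen_iff_ideal.mpr ⟨I * J, Submodule.FG.mul hIfg hJfg, rfl⟩).1
    have : W1 ∩ W2 = e ⁻¹' (e '' (W1 ∩ W2)) := (Set.preimage_image_eq _ e.injective).symm
    rw [this]
    exact e.isCompact_preimage.mpr hcpt
  -- X is quasi-compact
  have hcompact : IsCompact (Set.univ : Set X) := by
    haveI := e.symm.compactSpace
    exact isCompact_univ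
  -- the constructible topology on X is compact
  have hcons : @CompactSpace X (consTopology X) := by
    have hsymm_cont : @Continuous (PrimeSpectrum R) X
        (consTopology (PrimeSpectrum R)) (consTopology X) e.symm := by
      apply continuous_generateFrom'
      rintro s (⟨hso, hsc⟩ | ⟨U, hUo, hUc, rfl⟩)
      · exact cons_open_of_qc (hso.preimage e.symm.continuous)
          (e.symm.isCompact_preimage.mpr hsc)
      · rw [Set.preimage_compl]
        exact cons_open_compl_of_qc (hUo.preimage e.symm.continuous)
          (e.symm.isCompact_preimage.mpr hUc)
    have h1 : @IsCompact (PrimeSpectrum R) (consTopology (PrimeSpectrum R)) Set.univ :=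
      isCompact_univ' _ (cons_compact_spec R)
    have h2 := isCompact_image' _ _ e.symm hsymm_cont h1
    rw [Set.image_univ, e.symm.surjective.range_eq] at h2
    exact compactSpace_of' _ h2
  exact key_lemma hbasis hinter hcons hcompact Y
end

section
/- Let X be a spectral space and Y ⊆ X a quasi-compact subspace that is closed under generization. Then Y is closed in the inverse topology on X. -/
universe u

/-- A quasi-compact subspace of a spectral space that is closed under generization is closed
in the inverse topology. -/
theorem isClosed_inv_of_isCompact_of_stableUnderGenerization
    (X : Type u) [TopologicalSpace X] (hX : IsSpectralSpace X) (Y : Set X)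
    (hqc : IsCompact Y) (hgen : ∀ x y : X, y ∈ Y → y ∈ closure {x} → x ∈ Y) :
    @IsClosed X (invTopology X) Y := by
  obtain ⟨R, _, ⟨e⟩⟩ := hX
  -- key: for each x ∉ Y, a compact open set containing Y but not x
  have key : ∀ x : ↥Yᶜ, ∃ V : Set X, IsOpen V ∧ IsCompact V ∧ Y ⊆ V ∧ (x : X) ∉ V := by
    rintro ⟨x, hx⟩
    have hy : ∀ y ∈ Y, ∃ U : Set X, IsOpen U ∧ IsCompact U ∧ y ∈ U ∧ x ∉ U := by
      intro y hyY
      have hnc : e y ∉ closure {e x} := by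
        intro h
        apply hx
        apply hgen x y hyY
        have : closure {e x} = e '' closure {x} := by
          rw [e.image_closure, Set.image_singleton]
        rw [this] at h
        obtain ⟨z, hz, hze⟩ := h
        rwa [← e.injective hze]
      obtain ⟨U, hUmem, hyU, hUsub⟩ :=
        PrimeSpectrum.isTopologicalBasis_basic_opens.exists_subset_of_mem_open hnc
          (isClosed_closure (s := {e x})).isOpen_compl
      obtain ⟨f, rfl⟩ := hUmem
      have hxU : e x ∉ (PrimeSpectrum.basicOpen f : Set (PrimeSpectrum R)) := fun h =>
        hUsub h (subset_closure rfl)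
      refine ⟨e ⁻¹' (PrimeSpectrum.basicOpen f : Set (PrimeSpectrum R)),
        (PrimeSpectrum.basicOpen f).2.preimage e.continuous, ?_, hyU, hxU⟩
      exact e.isCompact_preimage.2 (PrimeSpectrum.isCompact_basicOpen f)
    choose U hUo hUc hUy hUx using hy
    obtain ⟨t, ht⟩ := hqc.elim_finite_subcover (fun y : ↥Y => U y y.2)
      (fun y => hUo y y.2) (fun y hyY => Set.mem_iUnion.2 ⟨⟨y, hyY⟩, hUy y hyY⟩)
    refine ⟨⋃ i ∈ t, U i i.2, isOpen_biUnion fun i _ => hUo i i.2,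
      t.finite_toSet.isCompact_biUnion fun i _ => hUc i i.2, ht, ?_⟩
    intro hxmem
    obtain ⟨i, _, hi⟩ := Set.mem_iUnion₂.1 hxmem
    exact hUx i i.2 hi
  choose V hVo hVc hVY hVx using key
  rw [← @isOpen_compl_iff X Y (invTopology X)]
  have hYc : Yᶜ = ⋃ x : ↥Yᶜ, (V x)ᶜ := by
    ext z
    constructor
    · intro hz
      exact Set.mem_iUnion.2 ⟨⟨z, hz⟩, hVx ⟨z, hz⟩⟩
    · intro hz hzY
      obtain ⟨x, hxz⟩ := Set.mem_iUnion.1 hz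
      exact hxz (hVY x hzY)
  rw [hYc]
  refine @isOpen_iUnion X _ (invTopology X) _ fun x => ?_
  exact TopologicalSpace.isOpen_generateFrom_of_mem
    (by simpa using ⟨hVo x, hVc x⟩)
end

section
/- Let X be a set and F a nonempty family of subsets of X. The collection of subsets of X that are F-stable under ultrafilters is the collection of closed sets of a topology on X, in which every element of the Boolean algebra generated by F is clopen; moreover the closure of a subset Y in this topology is the union of the sets Y_F(U) over all ultrafilters U on Y. -/
universe u

/-- The `F`-ultrafilter limit set of `Y ⊆ X` with respect to an ultrafilter `U` on `Y`:
`Y_F(U) := {x ∈ X : ∀ s ∈ F, x ∈ s ↔ s ∩ Y ∈ U}`. -/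
def ultraLimitSet {X : Type u} (F : Set (Set X)) (Y : Set X) (U : Ultrafilter Y) : Set X :=
  {x : X | ∀ s ∈ F, (x ∈ s ↔ (Subtype.val ⁻¹' s : Set Y) ∈ U)}

/-- `Y` is `F`-stable under ultrafilters if `Y_F(U) ⊆ Y` for every ultrafilter `U` on `Y`. -/
def IsUltraStable {X : Type u} (F : Set (Set X)) (Y : Set X) : Prop :=
  ∀ U : Ultrafilter Y, ultraLimitSet F Y U ⊆ Y

/-- Membership in the Boolean subalgebra of `Set X` generated by the family `F`. -/
inductive InBoolGen {X : Type u} (F : Set (Set X)) : Set X → Prop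
  | base : ∀ s ∈ F, InBoolGen F s
  | compl : ∀ s : Set X, InBoolGen F s → InBoolGen F sᶜ
  | inter : ∀ s t : Set X, InBoolGen F s → InBoolGen F t → InBoolGen F (s ∩ t)
  | union : ∀ s t : Set X, InBoolGen F s → InBoolGen F t → InBoolGen F (s ∪ t)

/-! The topology is the one induced by the `F`-type map `X → (F → Bool)` into a product of
discrete spaces. An ultrafilter converges to `x` in it exactly when it contains the same members
of `F` as `x` does, and ultrafilters on `X` containing `Y` are the images of ultrafilters on `Y`;
together these identify the closure of `Y` with `⋃ U, Y_F(U)`, and closed sets with stable ones. -/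

open Set Filter Topology

namespace Ultrafilter

theorem exists_map_val_eq_of_mem {X : Type u} {Y : Set X} {V : Ultrafilter X} (hY : Y ∈ V) :
    ∃ U : Ultrafilter Y, U.map Subtype.val = V := by
  have hrange : range (Subtype.val : Y → X) ∈ V := by rwa [Subtype.range_val]
  refine ⟨V.comap Subtype.val_injective hrange, coe_injective ?_⟩
  rw [coe_map, coe_comap, map_comap_of_mem hrange]

theorem tendsto_boolIndicator_iff {X : Type u} (s : Set X) (V : Ultrafilter X) (x : X) :
    Tendsto s.boolIndicator V (𝓝 (s.boolIndicator x)) ↔ (x ∈ s ↔ s ∈ V) := by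
  rw [nhds_discrete, tendsto_pure]
  by_cases hx : x ∈ s
  · simp only [hx, true_iff, (mem_iff_boolIndicator s x).1 hx, ← mem_iff_boolIndicator]
    rfl
  · simp only [hx, false_iff, (notMem_iff_boolIndicator s x).1 hx, ← notMem_iff_boolIndicator,
      ← compl_mem_iff_notMem]
    rfl

end Ultrafilter

namespace UltraStable

variable {X : Type u} (F : Set (Set X))

noncomputable def typeMap (x : X) : F → Bool :=
  fun s => (s : Set X).boolIndicator x

noncomputable abbrev topology : TopologicalSpace X :=
  TopologicalSpace.induced (typeMap F) inferInstance

theorem isClopen_of_mem {s : Set X} (hs : s ∈ F) : @IsClopen X (topology F) s := by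
  let := topology F
  have hcont : Continuous fun x => typeMap F x ⟨s, hs⟩ :=
    (continuous_apply (⟨s, hs⟩ : F)).comp (continuous_induced_dom (f := typeMap F))
  simpa only [typeMap, preimage_boolIndicator_true] using
    (isClopen_discrete {true}).preimage hcont

theorem isClopen_of_inBoolGen {s : Set X} (hs : InBoolGen F s) : @IsClopen X (topology F) s := by
  let := topology F
  induction hs with
  | base s hs => exact isClopen_of_mem F hs
  | compl s _ ih => exact ih.compl
  | inter s t _ _ ihs iht => exact ihs.inter iht
  | union s t _ _ ihs iht => exact ihs.union iht

theorem ultrafilter_le_nhds_iff (V : Ultrafilter X) (x : X) :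
    (V : Filter X) ≤ @nhds X (topology F) x ↔ ∀ s ∈ F, (x ∈ s ↔ s ∈ V) := by
  rw [topology, nhds_induced, ← map_le_iff_le_comap, ← tendsto_id', tendsto_map'_iff,
    tendsto_pi_nhds, Subtype.forall]
  exact forall₂_congr fun s _ => Ultrafilter.tendsto_boolIndicator_iff s V x

theorem closure_eq_iUnion_ultraLimitSet (Y : Set X) :
    @closure X (topology F) Y = ⋃ U : Ultrafilter Y, ultraLimitSet F Y U := by
  let := topology F
  ext x
  simp only [mem_closure_iff_ultrafilter, mem_iUnion, ultrafilter_le_nhds_iff]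
  constructor
  · rintro ⟨V, hYV, hVx⟩
    obtain ⟨U, rfl⟩ := Ultrafilter.exists_map_val_eq_of_mem hYV
    exact ⟨U, hVx⟩
  · rintro ⟨U, hUx⟩
    exact ⟨U.map Subtype.val, Ultrafilter.mem_map.2 (univ_mem' fun y => y.2), hUx⟩

theorem isClosed_iff_isUltraStable (Y : Set X) :
    @IsClosed X (topology F) Y ↔ IsUltraStable F Y := by
  let := topology F
  rw [← closure_subset_iff_isClosed, closure_eq_iUnion_ultraLimitSet, iUnion_subset_iff]
  rfl

end UltraStable

theorem ultraStable_sets_form_topology_general (X : Type u) (F : Set (Set X)) :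
    ∃ t : TopologicalSpace X,
      (∀ Y : Set X, @IsClosed X t Y ↔ IsUltraStable F Y) ∧
      (∀ s : Set X, InBoolGen F s → @IsClopen X t s) ∧
      (∀ Y : Set X, @closure X t Y = ⋃ U : Ultrafilter Y, ultraLimitSet F Y U) :=
  ⟨UltraStable.topology F, UltraStable.isClosed_iff_isUltraStable F,
    fun _ => UltraStable.isClopen_of_inBoolGen F, UltraStable.closure_eq_iUnion_ultraLimitSet F⟩

/-- The subsets of `X` that are `F`-stable under ultrafilters form the closed sets of a
topology on `X`; every element of the Boolean algebra generated by `F` is clopen in it; and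
the closure of `Y` in this topology is `⋃ {Y_F(U) : U ultrafilter on Y}`. -/
theorem ultraStable_sets_form_topology (X : Type u) (F : Set (Set X)) (hF : F.Nonempty) :
    ∃ t : TopologicalSpace X,
      (∀ Y : Set X, @IsClosed X t Y ↔ IsUltraStable F Y) ∧
      (∀ s : Set X, InBoolGen F s → @IsClopen X t s) ∧
      (∀ Y : Set X, @closure X t Y = ⋃ U : Ultrafilter Y, ultraLimitSet F Y U) :=
  ultraStable_sets_form_topology_general X F
end

section
/- Let X be a set and F a family of subsets of X. The F-ultrafilter topology on X is quasi-compact if and only if for every ultrafilter U on X, the set X_F(U) := {x ∈ X : for all F ∈ F, x ∈ F ↔ F ∈ U} is nonempty. -/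
universe u

/-- The `F`-ultrafilter topology on `X`: the topology whose closed sets are the subsets of `X`
that are `F`-stable under ultrafilters. -/
def ultraTopology {X : Type u} (F : Set (Set X)) : TopologicalSpace X :=
  TopologicalSpace.generateFrom {s : Set X | IsUltraStable F sᶜ}

open Filter Set TopologicalSpace Topology

lemma isUltraStable_of_mem {X : Type u} {F : Set (Set X)} {s : Set X} (hs : s ∈ F) :
    IsUltraStable F s := by
  intro U x hx
  have := (hx s hs)
  rw [Subtype.coe_preimage_self] at this
  exact this.mpr univ_mem

lemma isUltraStable_compl_of_mem {X : Type u} {F : Set (Set X)} {s : Set X} (hs : s ∈ F) :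
    IsUltraStable F sᶜ := by
  intro U x hx hxs
  have h := (hx s hs).mp hxs
  have he : (Subtype.val ⁻¹' s : Set ↥sᶜ) = ∅ :=
    Set.eq_empty_of_forall_notMem fun y hy => y.2 hy
  rw [he] at h
  exact U.neBot.ne (Filter.empty_mem_iff_bot.mp h)

lemma isOpen_of_mem {X : Type u} {F : Set (Set X)} {s : Set X} (hs : s ∈ F) :
    @IsOpen X (ultraTopology F) s :=
  TopologicalSpace.GenerateOpen.basic s (isUltraStable_compl_of_mem hs)

lemma isOpen_compl_of_mem {X : Type u} {F : Set (Set X)} {s : Set X} (hs : s ∈ F) :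
    @IsOpen X (ultraTopology F) sᶜ :=
  TopologicalSpace.GenerateOpen.basic sᶜ (show IsUltraStable F sᶜᶜ by
    rw [compl_compl]; exact isUltraStable_of_mem hs)

lemma le_nhds_iff_mem_limitSet {X : Type u} (F : Set (Set X)) (U : Ultrafilter X) (x : X) :
    (U : Filter X) ≤ @nhds X (ultraTopology F) x ↔ ∀ s ∈ F, (x ∈ s ↔ s ∈ U) := by
  letI : TopologicalSpace X := ultraTopology F
  constructor
  · intro hle s hsF
    constructor
    · intro hxs
      exact hle ((isOpen_of_mem hsF).mem_nhds hxs)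
    · intro hsU
      by_contra hxs
      have : sᶜ ∈ U := hle ((isOpen_compl_of_mem hsF).mem_nhds hxs)
      exact (Ultrafilter.compl_mem_iff_notMem.mp this) hsU
  · intro hx
    show (U : Filter X) ≤ @nhds X (TopologicalSpace.generateFrom _) x
    rw [nhds_generateFrom]
    refine le_iInf fun s => le_iInf fun hsp => ?_
    obtain ⟨hxs, hsg⟩ := hsp
    rw [le_principal_iff]
    by_contra hsU
    have hsc : sᶜ ∈ U := Ultrafilter.compl_mem_iff_notMem.mpr hsU
    have hrange : Set.range (Subtype.val : ↥sᶜ → X) ∈ U := by rwa [Subtype.range_coe]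
    set V : Ultrafilter ↥sᶜ := U.comap Subtype.val_injective hrange with hV
    have hxV : x ∈ ultraLimitSet F sᶜ V := by
      intro t htF
      rw [hx t htF, hV, Ultrafilter.mem_comap]
      constructor
      · intro htU
        exact mem_of_superset (inter_mem hsc htU) (by
          rintro y ⟨hy1, hy2⟩
          exact ⟨⟨y, hy1⟩, hy2, rfl⟩)
      · intro him
        refine mem_of_superset him ?_
        rintro y ⟨z, hz, rfl⟩
        exact hz
    exact (hsg V hxV) hxs

/-- The `F`-ultrafilter topology on `X` is quasi-compact if and only if, for every ultrafilter
`U` on `X`, the ultrafilter limit set `X_F(U) = {x : ∀ s ∈ F, x ∈ s ↔ s ∈ U}` is nonempty. -/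
theorem ultraTopology_compact_iff_limit_sets_nonempty (X : Type u) (F : Set (Set X)) :
    @CompactSpace X (ultraTopology F) ↔
      ∀ U : Ultrafilter X, {x : X | ∀ s ∈ F, (x ∈ s ↔ s ∈ U)}.Nonempty := by
  rw [← @isCompact_univ_iff X (ultraTopology F),
    @isCompact_iff_ultrafilter_le_nhds X (ultraTopology F)]
  constructor
  · intro h U
    obtain ⟨x, -, hx⟩ := h U (by simp)
    exact ⟨x, (le_nhds_iff_mem_limitSet F U x).mp hx⟩
  · intro h U _
    obtain ⟨x, hx⟩ := h U
    exact ⟨x, Set.mem_univ x, (le_nhds_iff_mem_limitSet F U x).mpr hx⟩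
end

section
/- Let D be an integral domain and Y, Z nonempty subsets of Spec(D). The spectral semistar operations satisfy s_Y = s_Z if and only if Y^gen = Z^gen, where Y^gen denotes the closure of Y under generization in Spec(D). -/
/-- For `E` a `D`-submodule of the quotient field `K` and `P` a prime ideal of `D`, the set
`E·D_P = {x ∈ K : s·x ∈ E for some s ∉ P}`. -/
def locSet (D K : Type*) [CommRing D] [IsDomain D] [Field K] [Algebra D K]
    [IsFractionRing D K] (E : Submodule D K) (P : Ideal D) : Set K :=
  {x : K | ∃ s : D, s ∉ P ∧ algebraMap D K s * x ∈ E}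

lemma gen_subset_aux (D K : Type*) [CommRing D] [IsDomain D] [Field K]
    [Algebra D K] [IsFractionRing D K]
    (Y Z : Set (PrimeSpectrum D)) (hZ : Z.Nonempty)
    (h : ∀ E : Submodule D K, E ≠ ⊥ →
        (⋂ P ∈ Y, locSet D K E P.asIdeal) = ⋂ P ∈ Z, locSet D K E P.asIdeal) :
    {Q : PrimeSpectrum D | ∃ P ∈ Y, Q.asIdeal ≤ P.asIdeal}
      ⊆ {Q : PrimeSpectrum D | ∃ P ∈ Z, Q.asIdeal ≤ P.asIdeal} := by
  have main : ∀ Q ∈ Y, ∃ P ∈ Z, Q.asIdeal ≤ P.asIdeal := by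
    intro Q hQY
    by_cases hQ : Q.asIdeal = ⊥
    · obtain ⟨P, hP⟩ := hZ
      exact ⟨P, hP, by simp [hQ]⟩
    · set E : Submodule D K := Submodule.map (Algebra.linearMap D K) Q.asIdeal with hE
      have hinj : Function.Injective (algebraMap D K) := IsFractionRing.injective D K
      have hEne : E ≠ ⊥ := by
        obtain ⟨q, hq, hq0⟩ := Submodule.exists_mem_ne_zero_of_ne_bot hQ
        intro hbot
        have : algebraMap D K q ∈ E := ⟨q, hq, rfl⟩
        rw [hbot, Submodule.mem_bot] at this
        exact hq0 (hinj (by simpa using this))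
      have h1 : (1 : K) ∉ ⋂ P ∈ Y, locSet D K E P.asIdeal := by
        intro h1
        have := Set.mem_iInter₂.mp h1 Q hQY
        obtain ⟨s, hs, hmem⟩ := this
        rw [mul_one] at hmem
        obtain ⟨q, hqQ, hq⟩ := hmem
        exact hs (by rwa [hinj hq] at hqQ)
      rw [h E hEne] at h1
      have := Set.mem_iInter₂.not.mp h1
      push_neg at this
      obtain ⟨P, hPZ, hP⟩ := this
      refine ⟨P, hPZ, fun q hq => ?_⟩
      by_contra hqP
      exact hP ⟨q, hqP, by rw [mul_one]; exact ⟨q, hq, rfl⟩⟩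
  rintro Q ⟨P', hP', hQP'⟩
  obtain ⟨P, hPZ, hle⟩ := main P' hP'
  exact ⟨P, hPZ, hQP'.trans hle⟩

/-- For nonempty `Y, Z ⊆ Spec D`, the spectral semistar operations `s_Y : E ↦ ⋂ {E D_P : P ∈ Y}`
and `s_Z` coincide (on all nonzero `D`-submodules of the quotient field) if and only if
`Y^gen = Z^gen`, where `Y^gen = {Q : Q ⊆ P for some P ∈ Y}`. -/
theorem spectral_semistar_eq_iff_gen_eq (D K : Type*) [CommRing D] [IsDomain D] [Field K]
    [Algebra D K] [IsFractionRing D K]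
    (Y Z : Set (PrimeSpectrum D)) (hY : Y.Nonempty) (hZ : Z.Nonempty) :
    (∀ E : Submodule D K, E ≠ ⊥ →
        (⋂ P ∈ Y, locSet D K E P.asIdeal) = ⋂ P ∈ Z, locSet D K E P.asIdeal) ↔
      {Q : PrimeSpectrum D | ∃ P ∈ Y, Q.asIdeal ≤ P.asIdeal}
        = {Q : PrimeSpectrum D | ∃ P ∈ Z, Q.asIdeal ≤ P.asIdeal} := by
  constructor
  · intro h
    exact Set.Subset.antisymm (gen_subset_aux D K Y Z hZ h)
      (gen_subset_aux D K Z Y hY (fun E hE => (h E hE).symm))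
  · intro hgen E _
    have key : ∀ (A B : Set (PrimeSpectrum D)),
        {Q : PrimeSpectrum D | ∃ P ∈ A, Q.asIdeal ≤ P.asIdeal}
          = {Q : PrimeSpectrum D | ∃ P ∈ B, Q.asIdeal ≤ P.asIdeal} →
        (⋂ P ∈ A, locSet D K E P.asIdeal) ⊆ ⋂ P ∈ B, locSet D K E P.asIdeal := by
      intro A B hAB x hx
      refine Set.mem_iInter₂.mpr fun P hPB => ?_
      have hPgen : P ∈ {Q : PrimeSpectrum D | ∃ P ∈ A, Q.asIdeal ≤ P.asIdeal} := by
        rw [hAB]; exact ⟨P, hPB, le_refl _⟩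
      obtain ⟨P', hP'A, hle⟩ := hPgen
      obtain ⟨s, hs, hmem⟩ := Set.mem_iInter₂.mp hx P' hP'A
      exact ⟨s, fun c => hs (hle c), hmem⟩
    exact Set.Subset.antisymm (key Y Z hgen) (key Z Y hgen.symm)
end

section
/- Let D be an integral domain and Y a nonempty subset of Spec(D). The spectral semistar operation s_Y is of finite type if and only if Y is quasi-compact in the Zariski topology of Spec(D). -/
private lemma fg_le_span_exists_finset {R M : Type*} [CommRing R] [AddCommGroup M] [Module R M]
    {s : Set M} {F : Submodule R M} (hfg : F.FG) (hle : F ≤ Submodule.span R s) :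
    ∃ T : Finset M, ↑T ⊆ s ∧ F ≤ Submodule.span R (↑T : Set M) := by
  obtain ⟨g, rfl⟩ := hfg
  choose T hTs hTm using fun x (hx : x ∈ (g : Set M)) =>
    Submodule.mem_span_finite_of_mem_span (hle (Submodule.subset_span hx))
  classical
  refine ⟨g.attach.biUnion (fun x => T x.1 x.2), ?_, ?_⟩
  · intro y hy
    simp only [Finset.coe_biUnion, Set.mem_iUnion, Finset.mem_coe] at hy
    obtain ⟨x, -, hy⟩ := hy
    exact hTs x.1 x.2 hy
  · rw [Submodule.span_le]
    intro x hx
    refine Submodule.span_mono ?_ (hTm x hx)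
    intro y hy
    simp only [Finset.coe_biUnion, Set.mem_iUnion, Finset.mem_coe]
    exact ⟨⟨x, hx⟩, Finset.mem_attach _ _, hy⟩

/-- For a nonempty `Y ⊆ Spec D`, the spectral semistar operation `s_Y : E ↦ ⋂ {E D_P : P ∈ Y}`
is of finite type (i.e., `E^{s_Y} = ⋃ {F^{s_Y} : F ⊆ E, F a nonzero finitely generated
submodule}` for every nonzero `E`) if and only if `Y` is quasi-compact in the Zariski
topology of `Spec D`. -/
theorem spectral_semistar_finite_type_iff_quasiCompact (D K : Type*) [CommRing D] [IsDomain D]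
    [Field K] [Algebra D K] [IsFractionRing D K]
    (Y : Set (PrimeSpectrum D)) (hY : Y.Nonempty) :
    (∀ E : Submodule D K, E ≠ ⊥ →
        (⋂ P ∈ Y, locSet D K E P.asIdeal)
          = ⋃ F ∈ {F : Submodule D K | F ≠ ⊥ ∧ F.FG ∧ F ≤ E},
              ⋂ P ∈ Y, locSet D K F P.asIdeal) ↔
      IsCompact Y := by
  have hinj : Function.Injective (algebraMap D K) := IsFractionRing.injective D K
  constructor
  · -- finite type → quasi-compact
    intro h
    rw [isCompact_iff_finite_subcover]
    intro ι U hUo hUc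
    set S : Set D := {f : D | ∃ i, (PrimeSpectrum.basicOpen f : Set (PrimeSpectrum D)) ⊆ U i}
      with hS
    have hbasic : ∀ P ∈ Y, ∃ f ∈ S, f ∉ P.asIdeal := by
      intro P hP
      obtain ⟨i, hPi⟩ := Set.mem_iUnion.mp (hUc hP)
      obtain ⟨v, ⟨f, rfl⟩, hPv, hvU⟩ :=
        PrimeSpectrum.isTopologicalBasis_basic_opens.exists_subset_of_mem_open hPi (hUo i)
      exact ⟨f, ⟨i, hvU⟩, by simpa using hPv⟩
    set E : Submodule D K := Submodule.span D (algebraMap D K '' S) with hE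
    have hEbot : E ≠ ⊥ := by
      obtain ⟨P, hP⟩ := hY
      obtain ⟨f, hfS, hfP⟩ := hbasic P hP
      have hf0 : f ≠ 0 := fun h0 => hfP (h0 ▸ P.asIdeal.zero_mem)
      rw [Submodule.ne_bot_iff]
      exact ⟨algebraMap D K f, Submodule.subset_span ⟨f, hfS, rfl⟩,
        fun h0 => hf0 (hinj (by simpa using h0))⟩
    have h1 : (1 : K) ∈ ⋂ P ∈ Y, locSet D K E P.asIdeal := by
      simp only [Set.mem_iInter]
      intro P hP
      obtain ⟨f, hfS, hfP⟩ := hbasic P hP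
      exact ⟨f, hfP, by rw [mul_one]; exact Submodule.subset_span ⟨f, hfS, rfl⟩⟩
    rw [h E hEbot] at h1
    simp only [Set.mem_iUnion, Set.mem_setOf_eq] at h1
    obtain ⟨F, ⟨-, hFfg, hFE⟩, hF1⟩ := h1
    obtain ⟨T, hTS, hFT⟩ := fg_le_span_exists_finset hFfg (hE ▸ hFE)
    choose g hgS hgy using fun (y : K) (hy : y ∈ (T : Set K)) => hTS hy
    choose idx hidx using fun (y : K) (hy : y ∈ (T : Set K)) => hgS y hy
    classical
    refine ⟨T.attach.image (fun y => idx y.1 y.2), ?_⟩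
    intro P hP
    simp only [Set.mem_iInter] at hF1
    obtain ⟨s, hsP, hsF⟩ := hF1 P hP
    rw [mul_one] at hsF
    by_contra hcon
    -- then every g y lies in P
    have hall : ∀ y (hy : y ∈ (T : Set K)), g y hy ∈ P.asIdeal := by
      intro y hy
      by_contra hgP
      refine hcon (Set.mem_iUnion₂.mpr ⟨idx y hy, ?_, hidx y hy (by simpa using hgP)⟩)
      exact Finset.mem_image.mpr ⟨⟨y, hy⟩, Finset.mem_attach _ _, rfl⟩
    have hTP : (T : Set K) ⊆ ↑(Submodule.map (Algebra.linearMap D K) P.asIdeal) := by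
      intro y hy
      exact ⟨g y hy, hall y hy, by simpa using hgy y hy⟩
    have : algebraMap D K s ∈ Submodule.map (Algebra.linearMap D K) P.asIdeal := by
      have := hFT hsF
      rw [← Submodule.span_eq (Submodule.map (Algebra.linearMap D K) P.asIdeal)]
      exact Submodule.span_mono hTP this
    obtain ⟨d, hdP, hd⟩ := this
    have : d = s := hinj (by simpa using hd)
    exact hsP (this ▸ hdP)
  · -- quasi-compact → finite type
    intro hc E hE
    apply Set.Subset.antisymm
    · intro x hx
      simp only [Set.mem_iInter] at hx
      rcases eq_or_ne x 0 with rfl | hx0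
      · -- 0 is in every member of the union; pick any nonzero principal F ≤ E
        obtain ⟨e, heE, he0⟩ := Submodule.ne_bot_iff E |>.mp hE
        refine Set.mem_iUnion₂.mpr ⟨Submodule.span D {e}, ⟨?_, Submodule.fg_span_singleton e,
          (Submodule.span_singleton_le_iff_mem e E).mpr heE⟩, ?_⟩
        · simpa [Submodule.span_singleton_eq_bot] using he0
        · simp only [Set.mem_iInter]
          intro P hP
          exact ⟨1, fun h1 => P.isPrime.ne_top ((Ideal.eq_top_iff_one _).mpr h1),
            by simp⟩
      · -- use compactness to find finitely many s's
        set σ := {s : D // algebraMap D K s * x ∈ E} with hσ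
        have hcov : Y ⊆ ⋃ s : σ, (PrimeSpectrum.basicOpen s.1 : Set (PrimeSpectrum D)) := by
          intro P hP
          obtain ⟨s, hsP, hsE⟩ := hx P hP
          exact Set.mem_iUnion.mpr ⟨⟨s, hsE⟩, by simpa using hsP⟩
        obtain ⟨t, ht⟩ := hc.elim_finite_subcover
          (fun s : σ => (PrimeSpectrum.basicOpen s.1 : Set (PrimeSpectrum D)))
          (fun s => (PrimeSpectrum.basicOpen s.1).2) hcov
        set F : Submodule D K :=
          Submodule.span D ((fun s : σ => algebraMap D K s.1 * x) '' ↑t) with hF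
        have hmem : ∀ P ∈ Y, ∃ s ∈ t, (s : σ).1 ∉ P.asIdeal := by
          intro P hP
          obtain ⟨s, hst, hs⟩ := Set.mem_iUnion₂.mp (ht hP)
          exact ⟨s, hst, by simpa using hs⟩
        refine Set.mem_iUnion₂.mpr ⟨F, ⟨?_, ?_, ?_⟩, ?_⟩
        · obtain ⟨P, hP⟩ := hY
          obtain ⟨s, hst, hs⟩ := hmem P hP
          have hs0 : s.1 ≠ 0 := fun h0 => hs (h0 ▸ P.asIdeal.zero_mem)
          rw [Submodule.ne_bot_iff]
          refine ⟨algebraMap D K s.1 * x, Submodule.subset_span ⟨s, hst, rfl⟩, ?_⟩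
          exact mul_ne_zero (fun h0 => hs0 (hinj (by simpa using h0))) hx0
        · exact Submodule.fg_span (t.finite_toSet.image _)
        · rw [Submodule.span_le]
          rintro y ⟨s, -, rfl⟩
          exact s.2
        · simp only [Set.mem_iInter]
          intro P hP
          obtain ⟨s, hst, hs⟩ := hmem P hP
          exact ⟨s.1, hs, Submodule.subset_span ⟨s, hst, rfl⟩⟩
    · -- trivial inclusion: each F ≤ E
      intro x hx
      obtain ⟨F, ⟨-, -, hFE⟩, hxF⟩ := Set.mem_iUnion₂.mp hx
      simp only [Set.mem_iInter] at hxF ⊢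
      intro P hP
      obtain ⟨s, hsP, hsF⟩ := hxF P hP
      exact ⟨s, hsP, hFE hsF⟩
end

section
/- Let D be an integral domain with quotient field K and let Y, Z be nonempty subsets of the Riemann–Zariski space Zar(D) of valuation overrings of D. Then the valuative operations ∧_Y and ∧_Z (given by E ↦ ⋂{EV : V ∈ Y}) are equal if and only if Y^gen = Z^gen, where Y^gen := {V ∈ Zar(D) : V ⊇ V₀ for some V₀ ∈ Y}. -/
/-!
If `Y^gen = Z^gen`, every `V ∈ Z` contains some `V₀ ∈ Y`, and then `EV₀ ⊆ EV`; hence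
`∧_Y ≤ ∧_Z`, and symmetrically. Conversely, if `W ⊇ V₀ ∈ Y` contains no member of `Z`, test
both operations on the maximal ideal `𝔪_W`: as `V₀ ⊆ W`, `𝔪_W V₀ = 𝔪_W` misses `1`, whereas
for `V ∈ Z` any `x ∈ V \ W` has `x⁻¹ ∈ 𝔪_W`, so `1 = x x⁻¹ ∈ 𝔪_W V`.
-/

open Submodule

namespace ValuationSubring

variable {K : Type*} [Field K]

theorem one_notMem_nonunits (A : ValuationSubring K) : (1 : K) ∉ A.nonunits := by
  simp [mem_nonunits_iff]

theorem mul_mem_nonunits (A : ValuationSubring K) {r x : K} (hr : r ∈ A)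
    (hx : x ∈ A.nonunits) : r * x ∈ A.nonunits := by
  rw [mem_nonunits_iff, map_mul] at *
  exact Right.mul_lt_one_of_le_of_lt ((A.valuation_le_one_iff r).2 hr) hx

/-- The maximal ideal `𝔪_W`, viewed in `K` as a module over any ring mapping into `W`. -/
def nonunitsSubmodule (R : Type*) [CommRing R] [Algebra R K] (W : ValuationSubring K)
    (hR : (algebraMap R K).range ≤ W.toSubring) : Submodule R K where
  carrier := W.nonunits
  add_mem' := W.nonunits.add_mem
  zero_mem' := W.nonunits.zero_mem
  smul_mem' r x hx := by
    rw [Algebra.smul_def]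
    exact W.mul_mem_nonunits (hR ⟨r, rfl⟩) hx

theorem span_subset_span_of_le {V W : ValuationSubring K} (h : V ≤ W) (s : Set K) :
    (span V s : Set K) ⊆ span W s := by
  intro x hx
  induction hx using span_induction with
  | mem y hy => exact subset_span hy
  | zero => exact (span W s).zero_mem
  | add a b _ _ ha hb => exact (span W s).add_mem ha hb
  | smul v a _ ha => exact (span W s).smul_mem (⟨v, h v.2⟩ : W) ha

theorem span_nonunits_subset {V W : ValuationSubring K} (h : V ≤ W) :
    (span V (W.nonunits : Set K) : Set K) ⊆ W.nonunits :=
  span_le.2 (le_refl (nonunitsSubmodule V W (by rintro _ ⟨v, rfl⟩; exact h v.2)))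

theorem one_mem_span_nonunits {V W : ValuationSubring K} (h : ¬V ≤ W) :
    (1 : K) ∈ span V (W.nonunits : Set K) := by
  obtain ⟨x, hxV, hxW⟩ := SetLike.not_le_iff_exists.mp h
  have hx0 : x ≠ 0 := by
    rintro rfl
    exact hxW W.zero_mem
  have hinv : x⁻¹ ∈ W.nonunits := W.inv_mem_nonunits_iff.2 (Or.inr hxW)
  have hunit : (⟨x, hxV⟩ : V) • x⁻¹ = 1 := mul_inv_cancel₀ hx0
  exact hunit ▸ (span V _).smul_mem _ (subset_span hinv)

theorem ne_bot_of_one_mem_span {D : Type*} [CommRing D] [Algebra D K] {V : ValuationSubring K}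
    {E : Submodule D K} (h : (1 : K) ∈ span V (E : Set K)) : E ≠ ⊥ := by
  rintro rfl
  simp at h

/-- `∧_Y`, extended to all subsets of `K`. -/
def valuativeSpan (Y : Set (ValuationSubring K)) (s : Set K) : Set K :=
  ⋂ V ∈ Y, (span V s : Set K)

/-- `Y^gen`. -/
def generizations (D : Type*) [CommRing D] [Algebra D K] (Y : Set (ValuationSubring K)) :
    Set (ValuationSubring K) :=
  {W | (algebraMap D K).range ≤ W.toSubring ∧ ∃ V₀ ∈ Y, V₀ ≤ W}

section

variable {D : Type*} [CommRing D] [Algebra D K] {Y Z : Set (ValuationSubring K)}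

theorem subset_generizations (hYD : ∀ V ∈ Y, (algebraMap D K).range ≤ V.toSubring) :
    Y ⊆ generizations D Y :=
  fun V hV => ⟨hYD V hV, V, hV, le_rfl⟩

theorem valuativeSpan_subset_of_generizations_subset
    (hZD : ∀ V ∈ Z, (algebraMap D K).range ≤ V.toSubring)
    (h : generizations D Z ⊆ generizations D Y) (s : Set K) :
    valuativeSpan Y s ⊆ valuativeSpan Z s := by
  refine Set.subset_iInter₂ fun V hV => ?_
  obtain ⟨-, V₀, hV₀, hV₀V⟩ := h (subset_generizations hZD hV)
  exact (Set.biInter_subset_of_mem hV₀).trans (span_subset_span_of_le hV₀V s)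

theorem generizations_subset_of_valuativeSpan_eq (hZ : Z.Nonempty)
    (h : ∀ E : Submodule D K, E ≠ ⊥ → valuativeSpan Y E = valuativeSpan Z E) :
    generizations D Y ⊆ generizations D Z := by
  rintro W ⟨hWD, V₀, hV₀, hV₀W⟩
  refine ⟨hWD, ?_⟩
  by_contra! hW
  set E := nonunitsSubmodule D W hWD
  have hE : E ≠ ⊥ := by
    obtain ⟨V, hV⟩ := hZ
    exact ne_bot_of_one_mem_span (one_mem_span_nonunits (hW V hV))
  have h1Z : (1 : K) ∈ valuativeSpan Z E :=
    Set.mem_iInter₂.2 fun V hV => one_mem_span_nonunits (hW V hV)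
  rw [← h E hE] at h1Z
  exact W.one_notMem_nonunits (span_nonunits_subset hV₀W (Set.mem_iInter₂.1 h1Z V₀ hV₀))

end

end ValuationSubring

open ValuationSubring

theorem valuative_semistar_eq_iff_gen_eq_general (D K : Type*) [CommRing D] [Field K]
    [Algebra D K]
    (Y Z : Set (ValuationSubring K))
    (hYD : ∀ V ∈ Y, (algebraMap D K).range ≤ V.toSubring)
    (hZD : ∀ V ∈ Z, (algebraMap D K).range ≤ V.toSubring)
    (hY : Y.Nonempty) (hZ : Z.Nonempty) :
    (∀ E : Submodule D K, E ≠ ⊥ →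
        (⋂ V ∈ Y, ((Submodule.span V (E : Set K) : Submodule V K) : Set K))
          = ⋂ V ∈ Z, ((Submodule.span V (E : Set K) : Submodule V K) : Set K)) ↔
      {W : ValuationSubring K | (algebraMap D K).range ≤ W.toSubring ∧ ∃ V₀ ∈ Y, V₀ ≤ W}
        = {W : ValuationSubring K |
            (algebraMap D K).range ≤ W.toSubring ∧ ∃ V₀ ∈ Z, V₀ ≤ W} := by
  change (∀ E : Submodule D K, E ≠ ⊥ → valuativeSpan Y E = valuativeSpan Z E) ↔
      generizations D Y = generizations D Z
  constructor
  · intro h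
    exact (generizations_subset_of_valuativeSpan_eq hZ h).antisymm
      (generizations_subset_of_valuativeSpan_eq hY fun E hE => (h E hE).symm)
  · intro hgen E _
    exact (valuativeSpan_subset_of_generizations_subset hZD hgen.ge E).antisymm
      (valuativeSpan_subset_of_generizations_subset hYD hgen.le E)

/-- Let `D` be an integral domain with quotient field `K` and `Y, Z` nonempty sets of valuation
overrings of `D` (elements of the Riemann–Zariski space `Zar(D)`). The valuative semistar
operations `∧_Y : E ↦ ⋂ {EV : V ∈ Y}` and `∧_Z` coincide on all nonzero `D`-submodules of `K`
if and only if `Y^gen = Z^gen`, where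
`Y^gen = {V ∈ Zar(D) : V ⊇ V₀ for some V₀ ∈ Y}`. -/
theorem valuative_semistar_eq_iff_gen_eq (D K : Type*) [CommRing D] [IsDomain D] [Field K]
    [Algebra D K] [IsFractionRing D K]
    (Y Z : Set (ValuationSubring K))
    (hYD : ∀ V ∈ Y, (algebraMap D K).range ≤ V.toSubring)
    (hZD : ∀ V ∈ Z, (algebraMap D K).range ≤ V.toSubring)
    (hY : Y.Nonempty) (hZ : Z.Nonempty) :
    (∀ E : Submodule D K, E ≠ ⊥ →
        (⋂ V ∈ Y, ((Submodule.span V (E : Set K) : Submodule V K) : Set K))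
          = ⋂ V ∈ Z, ((Submodule.span V (E : Set K) : Submodule V K) : Set K)) ↔
      {W : ValuationSubring K | (algebraMap D K).range ≤ W.toSubring ∧ ∃ V₀ ∈ Y, V₀ ≤ W}
        = {W : ValuationSubring K |
            (algebraMap D K).range ≤ W.toSubring ∧ ∃ V₀ ∈ Z, V₀ ≤ W} :=
  valuative_semistar_eq_iff_gen_eq_general D K Y Z hYD hZD hY hZ
end

section
/- Let X be a spectral space and let 𝒳(X) be the set of nonempty subsets of X that are closed in the inverse topology, topologized by the basis of open sets 𝒰(Ω) := {Y ∈ 𝒳(X) : Y ⊆ Ω} for Ω quasi-compact open in X. Then the map φ : X → 𝒳(X) sending x to {x}^gen (the closure of {x} under generization) is a topological embedding, and for Y₁, Y₂ ∈ 𝒳(X), Y₁ ⊆ Y₂ if and only if Y₁ ≤ Y₂ in the specialization order of 𝒳(X). -/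
universe u

/-- `𝒳(X)`: the nonempty inverse-closed subsets of `X`. -/
def InvClosedSets (X : Type u) [TopologicalSpace X] : Type u :=
  {Y : Set X // Y.Nonempty ∧ @IsClosed X (invTopology X) Y}

/-- The Zariski topology on `𝒳(X)`, generated by the basic open sets
`𝒰(Ω) = {Y : Y ⊆ Ω}` for `Ω` quasi-compact open in `X`. -/
instance (X : Type u) [TopologicalSpace X] : TopologicalSpace (InvClosedSets X) :=
  TopologicalSpace.generateFrom
    {s : Set (InvClosedSets X) |
      ∃ Ω : Set X, IsOpen Ω ∧ IsCompact Ω ∧ s = {Y : InvClosedSets X | Y.1 ⊆ Ω}}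

/-- From an inverse-open set one can extract, around any of its points, a basic
inverse-open neighborhood which is the complement of a single quasi-compact open set. -/
lemma invOpen_aux {X : Type u} [TopologicalSpace X] {s : Set X}
    (hs : TopologicalSpace.GenerateOpen {s : Set X | IsOpen sᶜ ∧ IsCompact sᶜ} s) :
    ∀ x ∈ s, ∃ Ω : Set X, IsOpen Ω ∧ IsCompact Ω ∧ x ∉ Ω ∧ Ωᶜ ⊆ s := by
  induction hs with
  | basic t ht =>
    intro x hx
    exact ⟨tᶜ, ht.1, ht.2, by simpa using hx, by simp⟩
  | univ => exact fun x _ => ⟨∅, isOpen_empty, isCompact_empty, by simp, by simp⟩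
  | inter t₁ t₂ h₁ h₂ ih₁ ih₂ =>
    intro x hx
    obtain ⟨Ω₁, hΩ₁o, hΩ₁c, hx₁, hsub₁⟩ := ih₁ x hx.1
    obtain ⟨Ω₂, hΩ₂o, hΩ₂c, hx₂, hsub₂⟩ := ih₂ x hx.2
    refine ⟨Ω₁ ∪ Ω₂, hΩ₁o.union hΩ₂o, hΩ₁c.union hΩ₂c, by simp [hx₁, hx₂], ?_⟩
    rw [Set.compl_union]
    exact fun z hz => ⟨hsub₁ hz.1, hsub₂ hz.2⟩
  | sUnion S hS ih =>
    intro x hx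
    obtain ⟨t, htS, hxt⟩ := hx
    obtain ⟨Ω, h1, h2, h3, h4⟩ := ih t htS x hxt
    exact ⟨Ω, h1, h2, h3, fun z hz => ⟨t, htS, h4 hz⟩⟩

/-- An inverse-closed set is the intersection of the quasi-compact open sets containing it. -/
lemma invClosed_eq_sInter {X : Type u} [TopologicalSpace X] {C : Set X}
    (hC : @IsClosed X (invTopology X) C) :
    C = ⋂₀ {Ω : Set X | IsOpen Ω ∧ IsCompact Ω ∧ C ⊆ Ω} := by
  apply Set.Subset.antisymm
  · exact fun x hx Ω hΩ => hΩ.2.2 hx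
  · intro x hx
    by_contra hxC
    have hopen : TopologicalSpace.GenerateOpen {s : Set X | IsOpen sᶜ ∧ IsCompact sᶜ} Cᶜ :=
      hC.isOpen_compl
    obtain ⟨Ω, hΩo, hΩc, hxΩ, hsub⟩ := invOpen_aux hopen x hxC
    have hCΩ : C ⊆ Ω := by
      intro z hz
      by_contra hzΩ
      exact (hsub hzΩ) hz
    exact hxΩ (hx Ω ⟨hΩo, hΩc, hCΩ⟩)

/-- Basic opens of `𝒳(X)` are downward closed. -/
lemma downward_aux {X : Type u} [TopologicalSpace X] {Y₁ Y₂ : InvClosedSets X}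
    (hsub : Y₁.1 ⊆ Y₂.1) {o : Set (InvClosedSets X)}
    (ho : TopologicalSpace.GenerateOpen
      {s : Set (InvClosedSets X) |
        ∃ Ω : Set X, IsOpen Ω ∧ IsCompact Ω ∧ s = {Y : InvClosedSets X | Y.1 ⊆ Ω}} o) :
    Y₂ ∈ o → Y₁ ∈ o := by
  induction ho with
  | basic t ht =>
    obtain ⟨Ω, -, -, rfl⟩ := ht
    exact fun hY₂ => hsub.trans hY₂
  | univ => exact fun _ => trivial
  | inter t₁ t₂ h₁ h₂ ih₁ ih₂ => exact fun hY₂ => ⟨ih₁ hY₂.1, ih₂ hY₂.2⟩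
  | sUnion S hS ih =>
    rintro ⟨t, htS, hY₂t⟩
    exact ⟨t, htS, ih t htS hY₂t⟩

/-- For a spectral space `X`, the map `φ : X → 𝒳(X)`, `x ↦ {x}^gen`, is a topological
embedding; moreover, for `Y₁, Y₂ ∈ 𝒳(X)`, `Y₁ ⊆ Y₂` if and only if `Y₁ ≤ Y₂` in the
specialization order of `𝒳(X)` (i.e., `Y₂ ∈ Cl({Y₁})`). -/
theorem gen_embedding_into_invClosedSets (X : Type u) [TopologicalSpace X]
    (hX : IsSpectralSpace X) :
    ∃ φ : X → InvClosedSets X,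
      (∀ x : X, (φ x).1 = {z : X | x ∈ closure {z}}) ∧
      Topology.IsEmbedding φ ∧
      ∀ Y₁ Y₂ : InvClosedSets X, Y₁.1 ⊆ Y₂.1 ↔ Y₂ ∈ closure {Y₁} := by
  obtain ⟨R, _, ⟨e⟩⟩ := hX
  haveI : T0Space X := e.isEmbedding.t0Space
  -- quasi-compact opens form a basis of X
  have hbasis : ∀ (U : Set X) (x : X), IsOpen U → x ∈ U →
      ∃ V : Set X, IsOpen V ∧ IsCompact V ∧ x ∈ V ∧ V ⊆ U := by
    intro U x hU hx
    have hU' : IsOpen (e.symm ⁻¹' U) := e.symm.continuous.isOpen_preimage U hU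
    have hx' : e x ∈ e.symm ⁻¹' U := by simp [hx]
    obtain ⟨b, ⟨r, rfl⟩, hxb, hbU⟩ :=
      PrimeSpectrum.isTopologicalBasis_basic_opens.exists_subset_of_mem_open hx' hU'
    refine ⟨e ⁻¹' (PrimeSpectrum.basicOpen r : Set (PrimeSpectrum R)),
      e.continuous.isOpen_preimage _ (PrimeSpectrum.basicOpen r).2, ?_, hxb, ?_⟩
    · have : e ⁻¹' (PrimeSpectrum.basicOpen r : Set (PrimeSpectrum R)) =
          e.symm '' (PrimeSpectrum.basicOpen r : Set (PrimeSpectrum R)) := by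
        ext z
        constructor
        · intro h
          exact ⟨e z, h, by simp⟩
        · rintro ⟨w, hw, rfl⟩
          simpa using hw
      rw [this]
      exact (PrimeSpectrum.isCompact_basicOpen r).image e.symm.continuous
    · intro z hz
      have := hbU hz
      simpa using this
  -- membership description of the generization set
  have hmem : ∀ x z : X, x ∈ closure ({z} : Set X) ↔ ∀ U : Set X, IsOpen U → x ∈ U → z ∈ U := by
    intro x z
    rw [mem_closure_iff]
    constructor
    · intro h U hU hx
      obtain ⟨w, hw, hw'⟩ := h U hU hx
      simpa [Set.mem_singleton_iff.mp hw'] using hw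
    · intro h U hU hx
      exact ⟨z, h U hU hx, rfl⟩
  -- the generization set equals the intersection of qc opens containing x
  have hgen : ∀ x : X, {z : X | x ∈ closure ({z} : Set X)} =
      ⋂₀ {Ω : Set X | IsOpen Ω ∧ IsCompact Ω ∧ x ∈ Ω} := by
    intro x
    ext z
    simp only [Set.mem_setOf_eq, Set.mem_sInter, hmem]
    constructor
    · intro h Ω hΩ
      exact h Ω hΩ.1 hΩ.2.2
    · intro h U hU hx
      obtain ⟨V, hVo, hVc, hxV, hVU⟩ := hbasis U x hU hx
      exact hVU (h V ⟨hVo, hVc, hxV⟩)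
  -- φ is well-defined
  have hφprop : ∀ x : X, ({z : X | x ∈ closure ({z} : Set X)}).Nonempty ∧
      @IsClosed X (invTopology X) {z : X | x ∈ closure ({z} : Set X)} := by
    intro x
    constructor
    · exact ⟨x, subset_closure rfl⟩
    · rw [hgen x]
      refine @IsClosed.mk X (invTopology X) _ ?_
      show TopologicalSpace.GenerateOpen {s : Set X | IsOpen sᶜ ∧ IsCompact sᶜ} _
      rw [Set.compl_sInter]
      refine TopologicalSpace.GenerateOpen.sUnion _ ?_
      rintro t ⟨Ω, ⟨hΩo, hΩc, -⟩, rfl⟩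
      exact TopologicalSpace.GenerateOpen.basic _ (by simp [hΩo, hΩc])
  set φ : X → InvClosedSets X := fun x => ⟨{z : X | x ∈ closure ({z} : Set X)}, hφprop x⟩
    with hφ
  refine ⟨φ, fun x => rfl, ?_, ?_⟩
  · -- embedding
    constructor
    · constructor
      rw [show (instTopologicalSpaceInvClosedSets X) = TopologicalSpace.generateFrom
        {s : Set (InvClosedSets X) |
          ∃ Ω : Set X, IsOpen Ω ∧ IsCompact Ω ∧ s = {Y : InvClosedSets X | Y.1 ⊆ Ω}} from rfl,
        induced_generateFrom_eq]
      have himg : Set.preimage φ ''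
          {s : Set (InvClosedSets X) |
            ∃ Ω : Set X, IsOpen Ω ∧ IsCompact Ω ∧ s = {Y : InvClosedSets X | Y.1 ⊆ Ω}} =
          {Ω : Set X | IsOpen Ω ∧ IsCompact Ω} := by
      -- φ ⁻¹' {Y | Y.1 ⊆ Ω} = Ω
        have key : ∀ Ω : Set X, IsOpen Ω →
            φ ⁻¹' {Y : InvClosedSets X | Y.1 ⊆ Ω} = Ω := by
          intro Ω hΩ
          ext x
          simp only [Set.mem_preimage, Set.mem_setOf_eq, hφ]
          constructor
          · intro h
            exact h (subset_closure rfl : x ∈ closure ({x} : Set X))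
          · intro hx z hz
            exact (hmem x z).mp hz Ω hΩ hx
        ext s
        constructor
        · rintro ⟨t, ⟨Ω, hΩo, hΩc, rfl⟩, rfl⟩
          rw [key Ω hΩo]
          exact ⟨hΩo, hΩc⟩
        · rintro ⟨hso, hsc⟩
          exact ⟨{Y : InvClosedSets X | Y.1 ⊆ s}, ⟨s, hso, hsc, rfl⟩, key s hso⟩
      rw [himg]
      apply le_antisymm
      · exact le_generateFrom (fun s hs => hs.1)
      · rw [TopologicalSpace.le_def]
        intro s hs
        have : s = ⋃₀ {V : Set X | (IsOpen V ∧ IsCompact V) ∧ V ⊆ s} := by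
          ext x
          constructor
          · intro hx
            obtain ⟨V, h1, h2, h3, h4⟩ := hbasis s x hs hx
            exact ⟨V, ⟨⟨h1, h2⟩, h4⟩, h3⟩
          · rintro ⟨V, ⟨-, hVs⟩, hxV⟩
            exact hVs hxV
        rw [this]
        exact TopologicalSpace.GenerateOpen.sUnion _
          (fun V hV => TopologicalSpace.GenerateOpen.basic _ hV.1)
    · -- injective
      intro x y hxy
      have h1 : y ∈ (φ x).1 := by
        rw [hxy]; exact subset_closure rfl
      have h2 : x ∈ (φ y).1 := by
        rw [← hxy]; exact subset_closure rfl
      have h1' : x ∈ closure ({y} : Set X) := h1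
      have h2' : y ∈ closure ({x} : Set X) := h2
      have s1 : y ⤳ x := specializes_iff_mem_closure.mpr h1'
      have s2 : x ⤳ y := specializes_iff_mem_closure.mpr h2'
      exact (s2.antisymm s1).eq
  · -- order characterization
    intro Y₁ Y₂
    constructor
    · intro hsub
      rw [mem_closure_iff]
      intro o ho hY₂
      exact ⟨Y₁, downward_aux hsub ho hY₂, rfl⟩
    · intro hcl
      have key : ∀ Ω : Set X, IsOpen Ω → IsCompact Ω → Y₂.1 ⊆ Ω → Y₁.1 ⊆ Ω := by
        intro Ω hΩo hΩc hY₂Ω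
        have ho : IsOpen {Y : InvClosedSets X | Y.1 ⊆ Ω} :=
          TopologicalSpace.GenerateOpen.basic _ ⟨Ω, hΩo, hΩc, rfl⟩
        obtain ⟨Z, hZ, hZ'⟩ := (mem_closure_iff.mp hcl) _ ho hY₂Ω
        rw [Set.mem_singleton_iff.mp hZ'] at hZ
        exact hZ
      calc Y₁.1 ⊆ ⋂₀ {Ω : Set X | IsOpen Ω ∧ IsCompact Ω ∧ Y₂.1 ⊆ Ω} := by
            intro z hz Ω hΩ
            exact key Ω hΩ.1 hΩ.2.1 hΩ.2.2 hz
        _ = Y₂.1 := (invClosed_eq_sInter Y₂.2.2).symm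
end

section
/- Let X be a spectral space with specialization order ≤, and let 𝒳(X) be the spectral space of nonempty inverse-closed subsets of X with the Zariski topology generated by 𝒰(Ω) = {Y : Y ⊆ Ω} for Ω quasi-compact open. The embedding φ : X → 𝒳(X), x ↦ {x}^gen, is surjective (hence a homeomorphism) if and only if (X, ≤) is linearly ordered. -/
universe u

/-!
Sets closed in the inverse topology are stable under generization, and in a prespectral space
`{x}^gen` is the intersection of the quasi-compact opens containing `x`, hence inverse-closed.
So if `φ` is onto, `{x}^gen ∪ {y}^gen = {w}^gen` for some `w`; then `w` is a generization of
`x` or of `y`, while both `x` and `y` are generizations of `w`, so `x` and `y` are comparable.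

Conversely, let `Z` be a nonempty inverse-closed chain. Zariski-closed and inverse-closed sets
are closed in the constructible topology, which is quasi-compact for spectral spaces, so the
directed family `Cl({z}) ∩ Z`, `z ∈ Z`, has a common point `m`. Every point of `Z` specializes
to `m ∈ Z`, and `Z = {m}^gen`.
-/

open Topology TopologicalSpace

section

variable {X : Type u} [TopologicalSpace X]

theorem IsSpectralSpace.spectralSpace (hX : IsSpectralSpace X) : SpectralSpace X := by
  obtain ⟨R, _, ⟨e⟩⟩ := hX
  have := e.symm.compactSpace
  exact e.isOpenEmbedding.spectralSpace

theorem isClosed_invTopology_of_isOpen_of_isCompact {U : Set X} (hU : IsOpen U)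
    (hU' : IsCompact U) : IsClosed[invTopology X] U :=
  @IsClosed.mk _ (invTopology X) _ (isOpen_generateFrom_of_mem (by simpa using ⟨hU, hU'⟩))

theorem StableUnderGeneralization.of_isClosed_invTopology {Y : Set X}
    (hY : IsClosed[invTopology X] Y) : StableUnderGeneralization Y := by
  rw [← stableUnderSpecialization_compl_iff]
  have hO := hY.isOpen_compl
  generalize Yᶜ = O at hO ⊢
  induction hO with
  | basic s hs => exact (isOpen_compl_iff.mp hs.1).stableUnderSpecialization
  | univ => exact stableUnderSpecialization_univ
  | inter s t _ _ hs ht => exact fun _ _ h hx ↦ ⟨hs h hx.1, ht h hx.2⟩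
  | sUnion S _ hS => exact stableUnderSpecialization_sUnion S hS

theorem isClosed_invTopology_setOf_specializes [PrespectralSpace X] (x : X) :
    IsClosed[invTopology X] {z | z ⤳ x} := by
  have : {z | z ⤳ x} = ⋂₀ {U | IsOpen U ∧ IsCompact U ∧ x ∈ U} := by
    ext z
    simp only [Set.mem_ofPred_eq, Set.mem_sInter, specializes_iff_forall_open]
    refine ⟨fun h U hU ↦ h U hU.1 hU.2.2, fun h U hU hxU ↦ ?_⟩
    obtain ⟨V, hV, hxV, hVU⟩ :=
      PrespectralSpace.isTopologicalBasis.exists_subset_of_mem_open hxU hU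
    exact hVU (h V ⟨hV.1, hV.2, hxV⟩)
  rw [this]
  exact @isClosed_sInter _ (invTopology X) _ fun U hU ↦
    isClosed_invTopology_of_isOpen_of_isCompact hU.1 hU.2.1

theorem constructibleTopology_le_invTopology : constructibleTopology X ≤ invTopology X :=
  le_generateFrom fun _ hs ↦
    hs.2.isOpen_constructibleTopology_of_isClosed (isOpen_compl_iff.mp hs.1)

theorem PrespectralSpace.constructibleTopology_le [PrespectralSpace X] :
    constructibleTopology X ≤ ‹_› := by
  intro u hu
  obtain ⟨S, hSB, rfl⟩ := PrespectralSpace.isTopologicalBasis.open_eq_sUnion hu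
  exact @isOpen_sUnion _ (constructibleTopology X) _ fun U hU ↦
    (hSB hU).2.isOpen_constructibleTopology_of_isOpen (hSB hU).1

theorem compactSpace_constructibleTopology [CompactSpace X] [QuasiSober X] [PrespectralSpace X]
    [QuasiSeparatedSpace X] : @CompactSpace X (constructibleTopology X) :=
  @Function.Surjective.compactSpace _ _ _ (constructibleTopology X) _
    (WithTopology.continuous_ofTopology _) _ (WithTopology.ofTopology_surjective _)

theorem exists_forall_specializes_of_isChain [CompactSpace X] [QuasiSober X] [PrespectralSpace X]
    [QuasiSeparatedSpace X] {Z : Set X} (hne : Z.Nonempty) (hZ : IsClosed[invTopology X] Z)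
    (hch : IsChain (· ⤳ ·) Z) : ∃ m ∈ Z, ∀ z ∈ Z, z ⤳ m := by
  have := compactSpace_constructibleTopology (X := X)
  have := hne.to_subtype
  have hcl (z : Z) : IsClosed[constructibleTopology X] (closure {z.1} ∩ Z) :=
    @IsClosed.inter _ _ _ (constructibleTopology X)
      (isClosed_closure.mono PrespectralSpace.constructibleTopology_le)
      (hZ.mono constructibleTopology_le_invTopology)
  have hdir : Directed (· ⊇ ·) fun z : Z ↦ closure {z.1} ∩ Z := by
    have : Std.Refl (α := X) (· ⤳ ·) := ⟨specializes_refl⟩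
    intro z₁ z₂
    rcases hch.total z₁.2 z₂.2 with h | h
    · exact ⟨z₂, Set.inter_subset_inter_left _ h.closure_subset, subset_rfl⟩
    · exact ⟨z₁, subset_rfl, Set.inter_subset_inter_left _ h.closure_subset⟩
  obtain ⟨m, hm⟩ := @IsCompact.nonempty_iInter_of_directed_nonempty_isCompact_isClosed X
    (constructibleTopology X) _ _ _ hdir (fun z ↦ ⟨z, subset_closure rfl, z.2⟩)
    (fun z ↦ @IsClosed.isCompact _ (constructibleTopology X) _ _ (hcl z)) hcl
  rw [Set.mem_iInter] at hm
  exact ⟨m, (hm ⟨_, hne.some_mem⟩).2,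
    fun z hz ↦ specializes_iff_mem_closure.mpr (hm ⟨z, hz⟩).1⟩

theorem specializes_total_of_forall_eq_setOf_specializes [PrespectralSpace X]
    (h : ∀ Y : Set X, Y.Nonempty → IsClosed[invTopology X] Y → ∃ m, Y = {z | z ⤳ m})
    (x y : X) : x ⤳ y ∨ y ⤳ x := by
  obtain ⟨w, hw⟩ := h ({z | z ⤳ x} ∪ {z | z ⤳ y}) ⟨x, Or.inl specializes_rfl⟩
    (@IsClosed.union _ _ _ (invTopology X) (isClosed_invTopology_setOf_specializes x)
      (isClosed_invTopology_setOf_specializes y))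
  have hw' (z : X) : z ⤳ x ∨ z ⤳ y ↔ z ⤳ w := Set.ext_iff.mp hw z
  rcases (hw' w).mpr specializes_rfl with hwx | hwy
  · exact Or.inr (((hw' y).mp (Or.inr specializes_rfl)).trans hwx)
  · exact Or.inl (((hw' x).mp (Or.inl specializes_rfl)).trans hwy)

theorem exists_eq_setOf_specializes_of_total [CompactSpace X] [QuasiSober X]
    [PrespectralSpace X] [QuasiSeparatedSpace X] (htot : ∀ x y : X, x ⤳ y ∨ y ⤳ x)
    {Y : Set X} (hne : Y.Nonempty) (hY : IsClosed[invTopology X] Y) :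
    ∃ m, Y = {z | z ⤳ m} := by
  obtain ⟨m, hmY, hm⟩ := exists_forall_specializes_of_isChain hne hY fun x _ y _ _ ↦ htot x y
  exact ⟨m, Set.ext fun z ↦
    ⟨hm z, fun hz ↦ StableUnderGeneralization.of_isClosed_invTopology hY hz hmY⟩⟩

end

/-- For a spectral space `X`, the embedding `φ : X → 𝒳(X)`, `x ↦ {x}^gen`, is surjective
(hence a homeomorphism) if and only if the specialization order of `X` (`x ≤ y` iff
`y ∈ Cl({x})`) is linear. -/
theorem gen_embedding_surjective_iff_linearOrder (X : Type u) [TopologicalSpace X]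
    (hX : IsSpectralSpace X) (φ : X → InvClosedSets X)
    (hφ : ∀ x : X, (φ x).1 = {z : X | x ∈ closure {z}}) :
    Function.Surjective φ ↔ ∀ x y : X, y ∈ closure {x} ∨ x ∈ closure {y} := by
  have := hX.spectralSpace
  have hφ' (x : X) : (φ x).1 = {z | z ⤳ x} := by
    simpa only [specializes_iff_mem_closure] using hφ x
  simp only [← specializes_iff_mem_closure]
  constructor
  · intro hsurj
    refine specializes_total_of_forall_eq_setOf_specializes fun Y hne hY ↦ ?_
    obtain ⟨m, hm⟩ := hsurj ⟨Y, hne, hY⟩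
    exact ⟨m, by rw [← hφ', hm]⟩
  · intro htot Y
    obtain ⟨m, hm⟩ := exists_eq_setOf_specializes_of_total htot Y.2.1 Y.2.2
    exact ⟨m, Subtype.ext (by rw [hφ', hm])⟩
end
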